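/- arXiv:2603.16465 — 4 statements merged into one kernel-verified Lean document; each statement's English description precedes it below -/
import Mathlib

section
/- Let a, b, c, θ, p ∈ ℂ with −c ∉ ℕ ∪ {0} and θ ≠ 0. Define the sequence (u_n) as the Maclaurin coefficients of (1−θz)^p F(a,b;c;z), so that (1−θz)^p F(a,b;c;z) = ∑_{n=0}^∞ u_n z^n for |z| < min(1, 1/|θ|), where (1−θz)^p denotes the principal branch exp(p · Log(1−θz)). Then u_0 = 1, u_1 = ab/c − θp, u_2 = −abθp/c + a(a+1)b(b+1)/(2c(c+1)) + θ²(p−1)p/2, and for all n ≥ 2, u_{n+1} = α_0(n) u_n + α_1(n) u_{n−1} + α_2(n) u_{n−2}, where α_0(n) = ((a+n)(b+n) + 2θn(c+n−1) − θp(c+2n))/((n+1)(c+n)), α_1(n) = θ(a(p − 2(b+n−1)) + b(−2n+p+2) + (c−2)θ − (n−p)(θ(c+n−p−3) + 2n) + 4n − p − 2)/((n+1)(c+n)), α_2(n) = θ²(a+n−p−2)(b+n−p−2)/((n+1)(c+n)). -/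
open Complex Finset Polynomial

noncomputable def F (a b c z : ℂ) : ℂ :=
  ∑' n : ℕ, (ascPochhammer ℂ n).eval a * (ascPochhammer ℂ n).eval b /
    ((ascPochhammer ℂ n).eval c * (Nat.factorial n : ℂ)) * z ^ n

open Filter PowerSeries Topology

namespace Stmt15Aux2

noncomputable def Hc (a b c : ℂ) (n : ℕ) : ℂ :=
  ((ascPochhammer ℂ n).eval a * (ascPochhammer ℂ n).eval b) /
    ((ascPochhammer ℂ n).eval c * (Nat.factorial n : ℂ))

noncomputable def Bc (θ p : ℂ) : ℕ → ℂ
  | 0 => 1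
  | n+1 => θ * ((n : ℂ) - p) / ((n : ℂ) + 1) * Bc θ p n

variable {a b c θ p : ℂ}

lemma natC_ne (n : ℕ) : ((n : ℂ) + 1) ≠ 0 := by
  have := Nat.cast_add_one_ne_zero (R := ℂ) n
  exact_mod_cast this

lemma cn_ne (hc : ∀ n : ℕ, -c ≠ (n : ℂ)) (n : ℕ) : c + (n : ℂ) ≠ 0 := by
  intro h; exact hc n (by linear_combination -h)

lemma asc_ne (hc : ∀ n : ℕ, -c ≠ (n : ℂ)) (n : ℕ) :
    (ascPochhammer ℂ n).eval c ≠ 0 := by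
  induction n with
  | zero => simp
  | succ n ih =>
      rw [ascPochhammer_succ_right]
      simp only [Polynomial.eval_mul, Polynomial.eval_add, Polynomial.eval_X,
        Polynomial.eval_natCast]
      exact mul_ne_zero ih (cn_ne hc n)

lemma fact_ne (n : ℕ) : ((Nat.factorial n : ℕ) : ℂ) ≠ 0 :=
  Nat.cast_ne_zero.mpr (Nat.factorial_ne_zero n)

lemma Hc_zero : Hc a b c 0 = 1 := by simp [Hc]

lemma Hc_succ (hc : ∀ n : ℕ, -c ≠ (n : ℂ)) (n : ℕ) :
    Hc a b c (n+1) = (a + n) * (b + n) / ((c + n) * ((n : ℂ) + 1)) * Hc a b c n := by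
  have h1 := asc_ne hc n
  have h2 := cn_ne hc n
  have h3 := fact_ne n
  have h4 := natC_ne n
  rw [Hc, Hc, ascPochhammer_succ_right, Nat.factorial_succ]
  simp only [Polynomial.eval_mul, Polynomial.eval_add, Polynomial.eval_X,
    Polynomial.eval_natCast]
  push_cast
  field_simp

lemma Hc_rec (hc : ∀ n : ℕ, -c ≠ (n : ℂ)) (n : ℕ) :
    ((n : ℂ) + 1) * (c + n) * Hc a b c (n+1) = (a + n) * (b + n) * Hc a b c n := by
  have h2 := cn_ne hc n
  have h4 := natC_ne n
  rw [Hc_succ hc]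
  field_simp

lemma Bc_succ (θ p : ℂ) (n : ℕ) :
    Bc θ p (n+1) = θ * ((n : ℂ) - p) / ((n : ℂ) + 1) * Bc θ p n := rfl

lemma Bc_rec (θ p : ℂ) (n : ℕ) :
    ((n : ℂ) + 1) * Bc θ p (n+1) = θ * ((n : ℂ) - p) * Bc θ p n := by
  have h := natC_ne n
  rw [Bc_succ]; field_simp

lemma coeff_dFun (f : PowerSeries ℂ) (n : ℕ) :
    PowerSeries.coeff n (PowerSeries.derivativeFun f) = PowerSeries.coeff (n + 1) f * (n + 1) :=
  PowerSeries.coeff_derivative f n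

lemma RB : PowerSeries.derivativeFun (PowerSeries.mk (Bc θ p))
      + PowerSeries.C θ * (PowerSeries.C p * PowerSeries.mk (Bc θ p))
    = PowerSeries.C θ *
      (PowerSeries.X * PowerSeries.derivativeFun (PowerSeries.mk (Bc θ p))) := by
  ext n
  cases n with
  | zero =>
      simp only [map_add, coeff_dFun, PowerSeries.coeff_mk,
        PowerSeries.coeff_C_mul, PowerSeries.coeff_zero_eq_constantCoeff, map_mul,
        PowerSeries.constantCoeff_X, zero_mul, mul_zero]
      rw [show ((0:ℕ)+1) = 1 from rfl]
      simp [Bc]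
  | succ n =>
      simp only [map_add, coeff_dFun, PowerSeries.coeff_mk,
        PowerSeries.coeff_C_mul, PowerSeries.coeff_succ_X_mul]
      have h1 := Bc_rec θ p (n+1)
      push_cast at h1 ⊢
      linear_combination h1

lemma RB2 : PowerSeries.derivativeFun (PowerSeries.derivativeFun (PowerSeries.mk (Bc θ p)))
      + PowerSeries.C θ *
        (PowerSeries.C p * PowerSeries.derivativeFun (PowerSeries.mk (Bc θ p)))
    = PowerSeries.C θ * (PowerSeries.X *
        PowerSeries.derivativeFun (PowerSeries.derivativeFun (PowerSeries.mk (Bc θ p))))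
      + PowerSeries.C θ * PowerSeries.derivativeFun (PowerSeries.mk (Bc θ p)) := by
  ext n
  cases n with
  | zero =>
      simp only [map_add, coeff_dFun, PowerSeries.coeff_mk,
        PowerSeries.coeff_C_mul, PowerSeries.coeff_zero_eq_constantCoeff, map_mul,
        PowerSeries.constantCoeff_X, zero_mul, mul_zero]
      have h1 := Bc_rec θ p 1
      push_cast at h1 ⊢
      linear_combination h1
  | succ n =>
      simp only [map_add, coeff_dFun, PowerSeries.coeff_mk,
        PowerSeries.coeff_C_mul, PowerSeries.coeff_succ_X_mul]
      have h1 := Bc_rec θ p (n+2)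
      push_cast at h1 ⊢
      linear_combination ((n : ℂ) + 2) * h1

lemma RF (hc : ∀ n : ℕ, -c ≠ (n : ℂ)) :
    PowerSeries.X * PowerSeries.derivativeFun
        (PowerSeries.derivativeFun (PowerSeries.mk (Hc a b c)))
      + PowerSeries.C c * PowerSeries.derivativeFun (PowerSeries.mk (Hc a b c))
    = PowerSeries.X * (PowerSeries.X * PowerSeries.derivativeFun
        (PowerSeries.derivativeFun (PowerSeries.mk (Hc a b c))))
      + PowerSeries.C a *
          (PowerSeries.X * PowerSeries.derivativeFun (PowerSeries.mk (Hc a b c)))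
      + PowerSeries.C b *
          (PowerSeries.X * PowerSeries.derivativeFun (PowerSeries.mk (Hc a b c)))
      + PowerSeries.X * PowerSeries.derivativeFun (PowerSeries.mk (Hc a b c))
      + PowerSeries.C a * (PowerSeries.C b * PowerSeries.mk (Hc a b c)) := by
  ext n
  rcases n with _|_|n
  · simp only [map_add, coeff_dFun, PowerSeries.coeff_mk,
      PowerSeries.coeff_C_mul, PowerSeries.coeff_zero_eq_constantCoeff, map_mul,
      PowerSeries.constantCoeff_X, PowerSeries.constantCoeff_C, PowerSeries.constantCoeff_mk,
      zero_mul, mul_zero]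
    have h1 := Hc_rec (a := a) (b := b) hc 0
    push_cast at h1 ⊢
    linear_combination h1
  · simp only [map_add, coeff_dFun, PowerSeries.coeff_mk,
      PowerSeries.coeff_C_mul, PowerSeries.coeff_succ_X_mul,
      PowerSeries.coeff_zero_eq_constantCoeff, map_mul, PowerSeries.constantCoeff_X,
      zero_mul, mul_zero]
    have h1 := Hc_rec (a := a) (b := b) hc 1
    push_cast at h1 ⊢
    linear_combination h1
  · simp only [map_add, coeff_dFun, PowerSeries.coeff_mk,
      PowerSeries.coeff_C_mul, PowerSeries.coeff_succ_X_mul]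
    have h1 := Hc_rec (a := a) (b := b) hc (n+2)
    push_cast at h1 ⊢
    linear_combination h1

noncomputable def Y0 (a b c θ p : ℂ) : PowerSeries ℂ :=
  PowerSeries.mk (Bc θ p) * PowerSeries.mk (Hc a b c)
noncomputable def Y1 (a b c θ p : ℂ) : PowerSeries ℂ :=
  PowerSeries.derivativeFun (Y0 a b c θ p)
noncomputable def Y2 (a b c θ p : ℂ) : PowerSeries ℂ :=
  PowerSeries.derivativeFun (Y1 a b c θ p)

lemma hG (hc : ∀ n : ℕ, -c ≠ (n : ℂ)) :
    PowerSeries.X * Y2 a b c θ p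
    - PowerSeries.C (1 + 2*θ) * (PowerSeries.X^2 * Y2 a b c θ p)
    + PowerSeries.C (2*θ + θ^2) * (PowerSeries.X^3 * Y2 a b c θ p)
    - PowerSeries.C (θ^2) * (PowerSeries.X^4 * Y2 a b c θ p)
    + PowerSeries.C c * Y1 a b c θ p
    + PowerSeries.C (2*θ*p - a - b - 1 - 2*θ*c) * (PowerSeries.X * Y1 a b c θ p)
    + PowerSeries.C (θ^2*c + 2*θ*(a+b+1) - 2*θ*p - 2*θ^2*p) *
        (PowerSeries.X^2 * Y1 a b c θ p)
    + PowerSeries.C (2*θ^2*p - θ^2*(a+b+1)) * (PowerSeries.X^3 * Y1 a b c θ p)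
    + PowerSeries.C (θ*p*c - a*b) * Y0 a b c θ p
    + PowerSeries.C (θ^2*p*(p+1) - θ*p*(a+b+1) - θ^2*p*c + 2*θ*(a*b)) *
        (PowerSeries.X * Y0 a b c θ p)
    + PowerSeries.C (θ^2*p*(a+b+1) - θ^2*p*(p+1) - θ^2*(a*b)) *
        (PowerSeries.X^2 * Y0 a b c θ p) = 0 := by
  have hd1 : Y1 a b c θ p = PowerSeries.mk (Bc θ p) *
      PowerSeries.derivativeFun (PowerSeries.mk (Hc a b c))
      + PowerSeries.mk (Hc a b c) * PowerSeries.derivativeFun (PowerSeries.mk (Bc θ p)) := by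
    rw [Y1, Y0, PowerSeries.derivativeFun_mul]
    simp [smul_eq_mul]
  have hd2 : Y2 a b c θ p = PowerSeries.mk (Bc θ p) *
      PowerSeries.derivativeFun (PowerSeries.derivativeFun (PowerSeries.mk (Hc a b c)))
      + 2 * (PowerSeries.derivativeFun (PowerSeries.mk (Bc θ p)) *
          PowerSeries.derivativeFun (PowerSeries.mk (Hc a b c)))
      + PowerSeries.mk (Hc a b c) *
        PowerSeries.derivativeFun (PowerSeries.derivativeFun (PowerSeries.mk (Bc θ p))) := by
    rw [Y2, hd1, PowerSeries.derivativeFun_add, PowerSeries.derivativeFun_mul,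
      PowerSeries.derivativeFun_mul]
    simp only [smul_eq_mul]
    ring
  rw [hd2, hd1, Y0]
  simp only [map_mul, map_add, map_sub, map_pow, map_one, map_ofNat]
  linear_combination
    ((1 - PowerSeries.C θ * PowerSeries.X)^2 * PowerSeries.mk (Bc θ p)) * RF (a := a) (b := b) hc
    + (2 * PowerSeries.X * (1 - PowerSeries.X) * (1 - PowerSeries.C θ * PowerSeries.X) *
        PowerSeries.derivativeFun (PowerSeries.mk (Hc a b c))
      + (PowerSeries.C c - (PowerSeries.C a + PowerSeries.C b + 1) * PowerSeries.X) *
        (1 - PowerSeries.C θ * PowerSeries.X) * PowerSeries.mk (Hc a b c)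
      + PowerSeries.C θ * (1 + PowerSeries.C p) * PowerSeries.X * (1 - PowerSeries.X) *
        PowerSeries.mk (Hc a b c)) * RB (θ := θ) (p := p)
    + (PowerSeries.X * (1 - PowerSeries.X) * PowerSeries.mk (Hc a b c) *
        (1 - PowerSeries.C θ * PowerSeries.X)) * RB2 (θ := θ) (p := p)

noncomputable def Vc (a b c θ p : ℂ) (n : ℕ) : ℂ :=
  ∑ k ∈ Finset.range (n+1), Bc θ p k * Hc a b c (n - k)

lemma coeff_aux (r : ℂ) (j d : ℕ) (f : PowerSeries ℂ) :
    PowerSeries.coeff (d + j) (PowerSeries.C r * (PowerSeries.X^j * f))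
      = r * PowerSeries.coeff d f := by
  rw [PowerSeries.coeff_C_mul, PowerSeries.coeff_X_pow_mul]

lemma coeff_aux0 (r : ℂ) (j N : ℕ) (h : N < j) (f : PowerSeries ℂ) :
    PowerSeries.coeff N (PowerSeries.C r * (PowerSeries.X^j * f)) = 0 := by
  rw [PowerSeries.coeff_C_mul, PowerSeries.coeff_X_pow_mul', if_neg (by omega), mul_zero]

lemma coeff_Y0 (n : ℕ) : PowerSeries.coeff n (Y0 a b c θ p) = Vc a b c θ p n := by
  rw [Y0, PowerSeries.coeff_mul, Vc, Finset.Nat.sum_antidiagonal_eq_sum_range_succ_mk]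
  simp [PowerSeries.coeff_mk]

lemma coeff_Y1 (n : ℕ) : PowerSeries.coeff n (Y1 a b c θ p)
    = Vc a b c θ p (n+1) * ((n : ℂ) + 1) := by
  rw [Y1, coeff_dFun, coeff_Y0]

lemma coeff_Y2 (n : ℕ) : PowerSeries.coeff n (Y2 a b c θ p)
    = Vc a b c θ p (n+2) * (((n : ℂ) + 2) * ((n : ℂ) + 1)) := by
  rw [Y2, coeff_dFun, coeff_Y1]
  push_cast
  ring

lemma hG2 (hc : ∀ n : ℕ, -c ≠ (n : ℂ)) :
    PowerSeries.C (1) * (PowerSeries.X^1 * Y2 a b c θ p)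
    + PowerSeries.C (-(1 + 2*θ)) * (PowerSeries.X^2 * Y2 a b c θ p)
    + PowerSeries.C (2*θ + θ^2) * (PowerSeries.X^3 * Y2 a b c θ p)
    + PowerSeries.C (-(θ^2)) * (PowerSeries.X^4 * Y2 a b c θ p)
    + PowerSeries.C (c) * (PowerSeries.X^0 * Y1 a b c θ p)
    + PowerSeries.C (2*θ*p - a - b - 1 - 2*θ*c) * (PowerSeries.X^1 * Y1 a b c θ p)
    + PowerSeries.C (θ^2*c + 2*θ*(a+b+1) - 2*θ*p - 2*θ^2*p) * (PowerSeries.X^2 * Y1 a b c θ p)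
    + PowerSeries.C (2*θ^2*p - θ^2*(a+b+1)) * (PowerSeries.X^3 * Y1 a b c θ p)
    + PowerSeries.C (θ*p*c - a*b) * (PowerSeries.X^0 * Y0 a b c θ p)
    + PowerSeries.C (θ^2*p*(p+1) - θ*p*(a+b+1) - θ^2*p*c + 2*θ*(a*b)) * (PowerSeries.X^1 * Y0 a b c θ p)
    + PowerSeries.C (θ^2*p*(a+b+1) - θ^2*p*(p+1) - θ^2*(a*b)) * (PowerSeries.X^2 * Y0 a b c θ p) = 0 := by
  have h := hG (a := a) (b := b) (c := c) (θ := θ) (p := p) hc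
  simp only [map_mul, map_add, map_sub, map_pow, map_one, map_ofNat, map_neg] at h ⊢
  linear_combination h



lemma Vc_rec (hc : ∀ n : ℕ, -c ≠ (n : ℂ)) (n : ℕ) (hn : 2 ≤ n) :
    Vc a b c θ p (n + 1) =
      ((a + (n : ℂ)) * (b + (n : ℂ)) + 2 * θ * (n : ℂ) * (c + (n : ℂ) - 1) - θ * p * (c + 2 * (n : ℂ))) /
          (((n : ℂ) + 1) * (c + (n : ℂ))) * Vc a b c θ p n
      + θ * (a * (p - 2 * (b + (n : ℂ) - 1)) + b * (-2 * (n : ℂ) + p + 2) + (c - 2) * θ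
          - ((n : ℂ) - p) * (θ * (c + (n : ℂ) - p - 3) + 2 * (n : ℂ)) + 4 * (n : ℂ) - p - 2) /
          (((n : ℂ) + 1) * (c + (n : ℂ))) * Vc a b c θ p (n - 1)
      + θ ^ 2 * (a + (n : ℂ) - p - 2) * (b + (n : ℂ) - p - 2) /
          (((n : ℂ) + 1) * (c + (n : ℂ))) * Vc a b c θ p (n - 2) := by
  obtain ⟨m, rfl⟩ : ∃ m, n = m + 2 := ⟨n - 2, by omega⟩
  simp only [show m+2-1 = m+1 from rfl, show m+2-2 = m from rfl]
  by_cases h0 : m = 0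
  · subst h0
    have hD : (((0+2 : ℕ)) : ℂ) + 1 ≠ 0 := natC_ne (0+2)
    have hD2 : c + ((0+2 : ℕ) : ℂ) ≠ 0 := cn_ne hc (0+2)
    rw [div_mul_eq_mul_div, div_mul_eq_mul_div, div_mul_eq_mul_div, ← add_div, ← add_div, eq_div_iff (mul_ne_zero hD hD2)]
    have t0 : PowerSeries.coeff 2 (PowerSeries.C (1) * (PowerSeries.X^1 * Y2 a b c θ p)) = (1) * PowerSeries.coeff 1 (Y2 a b c θ p) := coeff_aux (1) 1 (1) _
    have t1 : PowerSeries.coeff 2 (PowerSeries.C (-(1 + 2*θ)) * (PowerSeries.X^2 * Y2 a b c θ p)) = (-(1 + 2*θ)) * PowerSeries.coeff 0 (Y2 a b c θ p) := coeff_aux (-(1 + 2*θ)) 2 (0) _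
    have t2 : PowerSeries.coeff 2 (PowerSeries.C (2*θ + θ^2) * (PowerSeries.X^3 * Y2 a b c θ p)) = 0 := coeff_aux0 _ 3 2 (by omega) _
    have t3 : PowerSeries.coeff 2 (PowerSeries.C (-(θ^2)) * (PowerSeries.X^4 * Y2 a b c θ p)) = 0 := coeff_aux0 _ 4 2 (by omega) _
    have t4 : PowerSeries.coeff 2 (PowerSeries.C (c) * (PowerSeries.X^0 * Y1 a b c θ p)) = (c) * PowerSeries.coeff 2 (Y1 a b c θ p) := coeff_aux (c) 0 (2) _
    have t5 : PowerSeries.coeff 2 (PowerSeries.C (2*θ*p - a - b - 1 - 2*θ*c) * (PowerSeries.X^1 * Y1 a b c θ p)) = (2*θ*p - a - b - 1 - 2*θ*c) * PowerSeries.coeff 1 (Y1 a b c θ p) := coeff_aux (2*θ*p - a - b - 1 - 2*θ*c) 1 (1) _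
    have t6 : PowerSeries.coeff 2 (PowerSeries.C (θ^2*c + 2*θ*(a+b+1) - 2*θ*p - 2*θ^2*p) * (PowerSeries.X^2 * Y1 a b c θ p)) = (θ^2*c + 2*θ*(a+b+1) - 2*θ*p - 2*θ^2*p) * PowerSeries.coeff 0 (Y1 a b c θ p) := coeff_aux (θ^2*c + 2*θ*(a+b+1) - 2*θ*p - 2*θ^2*p) 2 (0) _
    have t7 : PowerSeries.coeff 2 (PowerSeries.C (2*θ^2*p - θ^2*(a+b+1)) * (PowerSeries.X^3 * Y1 a b c θ p)) = 0 := coeff_aux0 _ 3 2 (by omega) _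
    have t8 : PowerSeries.coeff 2 (PowerSeries.C (θ*p*c - a*b) * (PowerSeries.X^0 * Y0 a b c θ p)) = (θ*p*c - a*b) * PowerSeries.coeff 2 (Y0 a b c θ p) := coeff_aux (θ*p*c - a*b) 0 (2) _
    have t9 : PowerSeries.coeff 2 (PowerSeries.C (θ^2*p*(p+1) - θ*p*(a+b+1) - θ^2*p*c + 2*θ*(a*b)) * (PowerSeries.X^1 * Y0 a b c θ p)) = (θ^2*p*(p+1) - θ*p*(a+b+1) - θ^2*p*c + 2*θ*(a*b)) * PowerSeries.coeff 1 (Y0 a b c θ p) := coeff_aux (θ^2*p*(p+1) - θ*p*(a+b+1) - θ^2*p*c + 2*θ*(a*b)) 1 (1) _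
    have t10 : PowerSeries.coeff 2 (PowerSeries.C (θ^2*p*(a+b+1) - θ^2*p*(p+1) - θ^2*(a*b)) * (PowerSeries.X^2 * Y0 a b c θ p)) = (θ^2*p*(a+b+1) - θ^2*p*(p+1) - θ^2*(a*b)) * PowerSeries.coeff 0 (Y0 a b c θ p) := coeff_aux (θ^2*p*(a+b+1) - θ^2*p*(p+1) - θ^2*(a*b)) 2 (0) _
    have E := congrArg (PowerSeries.coeff (2)) (hG2 (a := a) (b := b) (c := c) (θ := θ) (p := p) hc)
    simp only [LinearMap.map_add, LinearMap.map_zero] at E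
    rw [t0, t1, t2, t3, t4, t5, t6, t7, t8, t9, t10] at E
    simp only [coeff_Y0, coeff_Y1, coeff_Y2] at E
    simp only [show (0:ℕ)+2+1 = 3 from rfl, show (0:ℕ)+2 = 2 from rfl, show (0:ℕ)+1 = 1 from rfl, show (1:ℕ)+2 = 3 from rfl, show (2:ℕ)+1 = 3 from rfl, show (1:ℕ)+1 = 2 from rfl] at E ⊢
    push_cast at E ⊢
    linear_combination E
  · by_cases h1 : m = 1
    · subst h1
      have hD : (((1+2 : ℕ)) : ℂ) + 1 ≠ 0 := natC_ne (1+2)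
      have hD2 : c + ((1+2 : ℕ) : ℂ) ≠ 0 := cn_ne hc (1+2)
      rw [div_mul_eq_mul_div, div_mul_eq_mul_div, div_mul_eq_mul_div, ← add_div, ← add_div, eq_div_iff (mul_ne_zero hD hD2)]
      have t0 : PowerSeries.coeff 3 (PowerSeries.C (1) * (PowerSeries.X^1 * Y2 a b c θ p)) = (1) * PowerSeries.coeff 2 (Y2 a b c θ p) := coeff_aux (1) 1 (2) _
      have t1 : PowerSeries.coeff 3 (PowerSeries.C (-(1 + 2*θ)) * (PowerSeries.X^2 * Y2 a b c θ p)) = (-(1 + 2*θ)) * PowerSeries.coeff 1 (Y2 a b c θ p) := coeff_aux (-(1 + 2*θ)) 2 (1) _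
      have t2 : PowerSeries.coeff 3 (PowerSeries.C (2*θ + θ^2) * (PowerSeries.X^3 * Y2 a b c θ p)) = (2*θ + θ^2) * PowerSeries.coeff 0 (Y2 a b c θ p) := coeff_aux (2*θ + θ^2) 3 (0) _
      have t3 : PowerSeries.coeff 3 (PowerSeries.C (-(θ^2)) * (PowerSeries.X^4 * Y2 a b c θ p)) = 0 := coeff_aux0 _ 4 3 (by omega) _
      have t4 : PowerSeries.coeff 3 (PowerSeries.C (c) * (PowerSeries.X^0 * Y1 a b c θ p)) = (c) * PowerSeries.coeff 3 (Y1 a b c θ p) := coeff_aux (c) 0 (3) _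
      have t5 : PowerSeries.coeff 3 (PowerSeries.C (2*θ*p - a - b - 1 - 2*θ*c) * (PowerSeries.X^1 * Y1 a b c θ p)) = (2*θ*p - a - b - 1 - 2*θ*c) * PowerSeries.coeff 2 (Y1 a b c θ p) := coeff_aux (2*θ*p - a - b - 1 - 2*θ*c) 1 (2) _
      have t6 : PowerSeries.coeff 3 (PowerSeries.C (θ^2*c + 2*θ*(a+b+1) - 2*θ*p - 2*θ^2*p) * (PowerSeries.X^2 * Y1 a b c θ p)) = (θ^2*c + 2*θ*(a+b+1) - 2*θ*p - 2*θ^2*p) * PowerSeries.coeff 1 (Y1 a b c θ p) := coeff_aux (θ^2*c + 2*θ*(a+b+1) - 2*θ*p - 2*θ^2*p) 2 (1) _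
      have t7 : PowerSeries.coeff 3 (PowerSeries.C (2*θ^2*p - θ^2*(a+b+1)) * (PowerSeries.X^3 * Y1 a b c θ p)) = (2*θ^2*p - θ^2*(a+b+1)) * PowerSeries.coeff 0 (Y1 a b c θ p) := coeff_aux (2*θ^2*p - θ^2*(a+b+1)) 3 (0) _
      have t8 : PowerSeries.coeff 3 (PowerSeries.C (θ*p*c - a*b) * (PowerSeries.X^0 * Y0 a b c θ p)) = (θ*p*c - a*b) * PowerSeries.coeff 3 (Y0 a b c θ p) := coeff_aux (θ*p*c - a*b) 0 (3) _
      have t9 : PowerSeries.coeff 3 (PowerSeries.C (θ^2*p*(p+1) - θ*p*(a+b+1) - θ^2*p*c + 2*θ*(a*b)) * (PowerSeries.X^1 * Y0 a b c θ p)) = (θ^2*p*(p+1) - θ*p*(a+b+1) - θ^2*p*c + 2*θ*(a*b)) * PowerSeries.coeff 2 (Y0 a b c θ p) := coeff_aux (θ^2*p*(p+1) - θ*p*(a+b+1) - θ^2*p*c + 2*θ*(a*b)) 1 (2) _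
      have t10 : PowerSeries.coeff 3 (PowerSeries.C (θ^2*p*(a+b+1) - θ^2*p*(p+1) - θ^2*(a*b)) * (PowerSeries.X^2 * Y0 a b c θ p)) = (θ^2*p*(a+b+1) - θ^2*p*(p+1) - θ^2*(a*b)) * PowerSeries.coeff 1 (Y0 a b c θ p) := coeff_aux (θ^2*p*(a+b+1) - θ^2*p*(p+1) - θ^2*(a*b)) 2 (1) _
      have E := congrArg (PowerSeries.coeff (3)) (hG2 (a := a) (b := b) (c := c) (θ := θ) (p := p) hc)
      simp only [LinearMap.map_add, LinearMap.map_zero] at E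
      rw [t0, t1, t2, t3, t4, t5, t6, t7, t8, t9, t10] at E
      simp only [coeff_Y0, coeff_Y1, coeff_Y2] at E
      simp only [show (1:ℕ)+2+1 = 4 from rfl, show (1:ℕ)+2 = 3 from rfl, show (2:ℕ)+2 = 4 from rfl, show (3:ℕ)+1 = 4 from rfl, show (2:ℕ)+1 = 3 from rfl, show (1:ℕ)+1 = 2 from rfl, show (0:ℕ)+2 = 2 from rfl, show (0:ℕ)+1 = 1 from rfl] at E ⊢
      push_cast at E ⊢
      linear_combination E
    · obtain ⟨k, rfl⟩ : ∃ k, m = k + 2 := ⟨m - 2, by omega⟩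
      have hD : (((k+2+2 : ℕ)) : ℂ) + 1 ≠ 0 := natC_ne (k+2+2)
      have hD2 : c + ((k+2+2 : ℕ) : ℂ) ≠ 0 := cn_ne hc (k+2+2)
      rw [div_mul_eq_mul_div, div_mul_eq_mul_div, div_mul_eq_mul_div, ← add_div, ← add_div, eq_div_iff (mul_ne_zero hD hD2)]
      have t0 : PowerSeries.coeff (k+4) (PowerSeries.C (1) * (PowerSeries.X^1 * Y2 a b c θ p)) = (1) * PowerSeries.coeff (k+3) (Y2 a b c θ p) := coeff_aux (1) 1 (k+3) _
      have t1 : PowerSeries.coeff (k+4) (PowerSeries.C (-(1 + 2*θ)) * (PowerSeries.X^2 * Y2 a b c θ p)) = (-(1 + 2*θ)) * PowerSeries.coeff (k+2) (Y2 a b c θ p) := coeff_aux (-(1 + 2*θ)) 2 (k+2) _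
      have t2 : PowerSeries.coeff (k+4) (PowerSeries.C (2*θ + θ^2) * (PowerSeries.X^3 * Y2 a b c θ p)) = (2*θ + θ^2) * PowerSeries.coeff (k+1) (Y2 a b c θ p) := coeff_aux (2*θ + θ^2) 3 (k+1) _
      have t3 : PowerSeries.coeff (k+4) (PowerSeries.C (-(θ^2)) * (PowerSeries.X^4 * Y2 a b c θ p)) = (-(θ^2)) * PowerSeries.coeff (k) (Y2 a b c θ p) := coeff_aux (-(θ^2)) 4 (k) _
      have t4 : PowerSeries.coeff (k+4) (PowerSeries.C (c) * (PowerSeries.X^0 * Y1 a b c θ p)) = (c) * PowerSeries.coeff (k+4) (Y1 a b c θ p) := coeff_aux (c) 0 (k+4) _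
      have t5 : PowerSeries.coeff (k+4) (PowerSeries.C (2*θ*p - a - b - 1 - 2*θ*c) * (PowerSeries.X^1 * Y1 a b c θ p)) = (2*θ*p - a - b - 1 - 2*θ*c) * PowerSeries.coeff (k+3) (Y1 a b c θ p) := coeff_aux (2*θ*p - a - b - 1 - 2*θ*c) 1 (k+3) _
      have t6 : PowerSeries.coeff (k+4) (PowerSeries.C (θ^2*c + 2*θ*(a+b+1) - 2*θ*p - 2*θ^2*p) * (PowerSeries.X^2 * Y1 a b c θ p)) = (θ^2*c + 2*θ*(a+b+1) - 2*θ*p - 2*θ^2*p) * PowerSeries.coeff (k+2) (Y1 a b c θ p) := coeff_aux (θ^2*c + 2*θ*(a+b+1) - 2*θ*p - 2*θ^2*p) 2 (k+2) _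
      have t7 : PowerSeries.coeff (k+4) (PowerSeries.C (2*θ^2*p - θ^2*(a+b+1)) * (PowerSeries.X^3 * Y1 a b c θ p)) = (2*θ^2*p - θ^2*(a+b+1)) * PowerSeries.coeff (k+1) (Y1 a b c θ p) := coeff_aux (2*θ^2*p - θ^2*(a+b+1)) 3 (k+1) _
      have t8 : PowerSeries.coeff (k+4) (PowerSeries.C (θ*p*c - a*b) * (PowerSeries.X^0 * Y0 a b c θ p)) = (θ*p*c - a*b) * PowerSeries.coeff (k+4) (Y0 a b c θ p) := coeff_aux (θ*p*c - a*b) 0 (k+4) _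
      have t9 : PowerSeries.coeff (k+4) (PowerSeries.C (θ^2*p*(p+1) - θ*p*(a+b+1) - θ^2*p*c + 2*θ*(a*b)) * (PowerSeries.X^1 * Y0 a b c θ p)) = (θ^2*p*(p+1) - θ*p*(a+b+1) - θ^2*p*c + 2*θ*(a*b)) * PowerSeries.coeff (k+3) (Y0 a b c θ p) := coeff_aux (θ^2*p*(p+1) - θ*p*(a+b+1) - θ^2*p*c + 2*θ*(a*b)) 1 (k+3) _
      have t10 : PowerSeries.coeff (k+4) (PowerSeries.C (θ^2*p*(a+b+1) - θ^2*p*(p+1) - θ^2*(a*b)) * (PowerSeries.X^2 * Y0 a b c θ p)) = (θ^2*p*(a+b+1) - θ^2*p*(p+1) - θ^2*(a*b)) * PowerSeries.coeff (k+2) (Y0 a b c θ p) := coeff_aux (θ^2*p*(a+b+1) - θ^2*p*(p+1) - θ^2*(a*b)) 2 (k+2) _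
      have E := congrArg (PowerSeries.coeff (k+4)) (hG2 (a := a) (b := b) (c := c) (θ := θ) (p := p) hc)
      simp only [LinearMap.map_add, LinearMap.map_zero] at E
      rw [t0, t1, t2, t3, t4, t5, t6, t7, t8, t9, t10] at E
      simp only [coeff_Y0, coeff_Y1, coeff_Y2] at E
      simp only [show (k:ℕ)+2+2+1 = k+5 from rfl, show (k:ℕ)+2+2 = k+4 from rfl, show (k:ℕ)+3+2 = k+5 from rfl, show (k:ℕ)+1+2 = k+3 from rfl, show (k:ℕ)+4+1 = k+5 from rfl, show (k:ℕ)+3+1 = k+4 from rfl, show (k:ℕ)+2+1 = k+3 from rfl, show (k:ℕ)+1+1 = k+2 from rfl] at E ⊢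
      push_cast at E ⊢
      linear_combination E

variable {a b c θ p : ℂ}

lemma tendsto_quot (x y : ℂ) :
    Tendsto (fun n : ℕ => (x + n)/(y + n)) atTop (𝓝 1) := by
  have hb : Tendsto (fun n : ℕ => ‖x - y‖ / ((n:ℝ) - ‖y‖)) atTop (𝓝 0) :=
    Tendsto.div_atTop tendsto_const_nhds
      (tendsto_atTop_add_const_right _ (-‖y‖) tendsto_natCast_atTop_atTop)
  have hyn : ∀ᶠ n : ℕ in atTop, ‖y‖ + 1 ≤ (n:ℝ) := by
    filter_upwards [eventually_ge_atTop (⌈‖y‖⌉₊ + 1)] with n hn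
    have h1 : (‖y‖:ℝ) ≤ ⌈‖y‖⌉₊ := Nat.le_ceil _
    have h2 : ((⌈‖y‖⌉₊ + 1 : ℕ):ℝ) ≤ (n:ℝ) := by exact_mod_cast hn
    push_cast at h2
    linarith
  have hne : ∀ᶠ n : ℕ in atTop, ‖y + (n:ℂ)‖ ≥ (n:ℝ) - ‖y‖ ∧ (0:ℝ) < (n:ℝ) - ‖y‖ := by
    filter_upwards [hyn] with n hn
    have h3 : ‖(n:ℂ)‖ = (n:ℝ) := by simp
    have h4 : ‖(n:ℂ)‖ ≤ ‖y + n‖ + ‖y‖ := by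
      calc ‖(n:ℂ)‖ = ‖(y + n) + (-y)‖ := by ring_nf
        _ ≤ ‖y + n‖ + ‖-y‖ := norm_add_le _ _
        _ = ‖y + n‖ + ‖y‖ := by rw [norm_neg]
    constructor
    · rw [h3] at h4; linarith
    · linarith
  have h1 : Tendsto (fun n : ℕ => (x - y)/(y + n)) atTop (𝓝 0) := by
    apply squeeze_zero_norm' _ hb
    filter_upwards [hne] with n ⟨hn1, hn2⟩
    rw [norm_div]
    exact div_le_div_of_nonneg_left (norm_nonneg _) hn2 hn1
  have h2 : Tendsto (fun n : ℕ => 1 + (x - y)/(y + n)) atTop (𝓝 1) := by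
    simpa using h1.const_add 1
  apply h2.congr'
  filter_upwards [hne] with n ⟨hn1, hn2⟩
  have hy : y + (n:ℂ) ≠ 0 := by
    intro h; rw [h, norm_zero] at hn1; linarith
  field_simp
  ring

lemma summable_norm_ratio {f q : ℕ → ℂ} {l : ℝ}
    (hf : ∀ n, f (n+1) = q n * f n)
    (hq : Tendsto (fun n => ‖q n‖) atTop (𝓝 l)) (hl : l < 1) :
    Summable fun n => ‖f n‖ := by
  have hl0 : 0 ≤ l := ge_of_tendsto' hq (fun n => norm_nonneg _)
  apply summable_of_ratio_norm_eventually_le (r := (l+1)/2) (by linarith)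
  have hev : ∀ᶠ n in atTop, ‖q n‖ ≤ (l+1)/2 := by
    apply hq.eventually_le_const
    linarith
  filter_upwards [hev] with n hn
  rw [Real.norm_of_nonneg (norm_nonneg _), Real.norm_of_nonneg (norm_nonneg _), hf, norm_mul]
  exact mul_le_mul_of_nonneg_right hn (norm_nonneg _)

lemma SB {z : ℂ} (hz : ‖θ * z‖ < 1) : Summable fun n => ‖Bc θ p n * z^n‖ := by
  apply summable_norm_ratio (q := fun n : ℕ => (θ * z) * ((-p + n)/(1 + n))) (l := ‖θ * z‖)
  · intro n
    rw [pow_succ, Bc_succ]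
    ring
  · have := ((tendsto_quot (-p) 1).const_mul (θ*z)).norm
    simpa using this
  · exact hz

lemma SD {s : ℝ} (hs : ‖θ * (s:ℂ)‖ < 1) :
    Summable fun n => ‖Bc θ p n * ((n:ℂ)+1) * (s:ℂ)^n‖ := by
  apply summable_norm_ratio
    (q := fun n : ℕ => (θ * s) * ((-p + n)/(1 + n) * ((2 + n)/(1 + n)))) (l := ‖θ * (s:ℂ)‖)
  · intro n
    have h := natC_ne n
    have h' : (1:ℂ) + (n:ℂ) ≠ 0 := by rw [add_comm]; exact natC_ne n
    rw [pow_succ, Bc_succ]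
    push_cast
    field_simp
    ring
  · have := (((tendsto_quot (-p) 1).mul (tendsto_quot 2 1)).const_mul (θ*(s:ℂ))).norm
    simpa using this
  · exact hs


lemma slit (hθ : θ ≠ 0) {s : ℝ} (hsθ : ‖θ‖ * s < 1) {w : ℂ} (hw : w ∈ Metric.ball (0:ℂ) s) :
    (1 - θ*w) ∈ slitPlane ∧ 1 - θ*w ≠ 0 := by
  have hwn : ‖w‖ < s := by simpa [Metric.mem_ball, dist_zero_right] using hw
  have h1 : ‖θ*w‖ < 1 := by
    rw [norm_mul]
    calc ‖θ‖ * ‖w‖ ≤ ‖θ‖ * s := by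
          apply mul_le_mul_of_nonneg_left hwn.le (norm_nonneg _)
      _ < 1 := hsθ
  have hre : 0 < (1 - θ*w).re := by
    have h2 : |(θ*w).re| ≤ ‖θ*w‖ := Complex.abs_re_le_norm _
    have : (1 - θ*w).re = 1 - (θ*w).re := by simp
    rw [this]
    have := abs_le.mp h2
    linarith
  refine ⟨Or.inl hre, ?_⟩
  intro h
  rw [h] at hre
  simp at hre

lemma binom_eq (hθ : θ ≠ 0) {s : ℝ} (hs0 : 0 < s) (hsθ : ‖θ‖ * s < 1) :
    ∀ y ∈ Metric.ball (0:ℂ) s, (∑' n, Bc θ p n * y^n) = (1 - θ*y)^p := by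
  have hsC : ‖θ * (s:ℂ)‖ < 1 := by
    rw [norm_mul, Complex.norm_real, Real.norm_of_nonneg hs0.le]; exact hsθ
  have hu : Summable fun n => ‖Bc θ p n * ((n:ℂ)+1) * (s:ℂ)^n‖ / s := (SD hsC).div_const s
  have bound : ∀ (n : ℕ) (w : ℂ), w ∈ Metric.ball (0:ℂ) s →
      ‖Bc θ p n * ((n:ℂ) * w^(n-1))‖ ≤ ‖Bc θ p n * ((n:ℂ)+1) * (s:ℂ)^n‖ / s := by
    intro n w hw
    have hwn : ‖w‖ ≤ s := by
      have : ‖w‖ < s := by simpa [Metric.mem_ball, dist_zero_right] using hw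
      exact this.le
    cases n with
    | zero => simp; positivity
    | succ n =>
        have e1 : ‖Bc θ p (n+1) * (((n+1:ℕ):ℂ) * w^(n+1-1))‖
            = ‖Bc θ p (n+1)‖ * (((n:ℝ)+1) * ‖w‖^n) := by
          rw [norm_mul, norm_mul, norm_pow, Complex.norm_natCast]
          push_cast
          ring
        have e2 : ‖Bc θ p (n+1) * (((n+1:ℕ):ℂ)+1) * (s:ℂ)^(n+1)‖ / s
            = ‖Bc θ p (n+1)‖ * (((n:ℝ)+2) * s^n) := by
          rw [norm_mul, norm_mul, norm_pow, Complex.norm_real,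
            Real.norm_of_nonneg hs0.le, pow_succ]
          have : ‖(((n+1:ℕ):ℂ)+1)‖ = (n:ℝ)+2 := by
            rw [show (((n+1:ℕ):ℂ)+1) = (((n+2:ℕ)):ℂ) by push_cast; ring, Complex.norm_natCast]
            push_cast; ring
          rw [this]
          field_simp
        rw [e1, e2]
        have h1 : ‖w‖^n ≤ s^n := pow_le_pow_left₀ (norm_nonneg _) hwn n
        apply mul_le_mul_of_nonneg_left _ (norm_nonneg _)
        have hn0 : (0:ℝ) ≤ (n:ℝ) := Nat.cast_nonneg n
        have hsn : (0:ℝ) ≤ s^n := by positivity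
        calc ((n:ℝ)+1) * ‖w‖^n ≤ ((n:ℝ)+1) * s^n :=
              mul_le_mul_of_nonneg_left h1 (by positivity)
          _ ≤ ((n:ℝ)+2) * s^n := by nlinarith
  have hg0 : Summable fun n => Bc θ p n * (0:ℂ)^n := by
    apply summable_of_ne_finset_zero (s := {0})
    intro n hn
    simp only [Finset.mem_singleton] at hn
    simp [zero_pow hn]
  have hball0 : (0:ℂ) ∈ Metric.ball (0:ℂ) s := Metric.mem_ball_self hs0
  have hasDeriv : ∀ w ∈ Metric.ball (0:ℂ) s,
      HasDerivAt (fun z => ∑' n, Bc θ p n * z^n)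
        (∑' n, Bc θ p n * ((n:ℂ) * w^(n-1))) w := by
    intro w hw
    exact hasDerivAt_tsum_of_isPreconnected hu Metric.isOpen_ball
      (convex_ball (0:ℂ) s).isPreconnected
      (fun n y _ => by simpa using ((hasDerivAt_pow n y).const_mul (Bc θ p n)))
      bound hball0 hg0 hw
  have hsummS : ∀ w ∈ Metric.ball (0:ℂ) s,
      Summable fun n => Bc θ p n * ((n:ℂ) * w^(n-1)) := by
    intro w hw
    exact Summable.of_norm (hu.of_nonneg_of_le (fun n => norm_nonneg _) (fun n => bound n w hw))
  have hsummG : ∀ w ∈ Metric.ball (0:ℂ) s, Summable fun n => Bc θ p n * w^n := by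
    intro w hw
    have hwn : ‖w‖ < s := by simpa [Metric.mem_ball, dist_zero_right] using hw
    have : ‖θ * w‖ < 1 := by
      rw [norm_mul]
      calc ‖θ‖*‖w‖ ≤ ‖θ‖*s := mul_le_mul_of_nonneg_left hwn.le (norm_nonneg _)
        _ < 1 := hsθ
    exact (SB this).of_norm
  have KEY : ∀ w ∈ Metric.ball (0:ℂ) s,
      (1 - θ*w) * (∑' n, Bc θ p n * ((n:ℂ) * w^(n-1))) + θ*p*(∑' n, Bc θ p n * w^n) = 0 := by
    intro w hw
    have hS := hsummS w hw
    have hG := hsummG w hw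
    have hcong : ∀ n : ℕ, (θ*w)*(Bc θ p n * ((n:ℂ) * w^(n-1))) = (θ * Bc θ p n * (n:ℂ)) * w^n := by
      intro n
      cases n with
      | zero => simp
      | succ n =>
          rw [show n+1-1 = n from rfl, pow_succ]
          push_cast
          ring
    have h1 : Summable fun n => (Bc θ p (n+1) * (((n+1:ℕ)):ℂ)) * w^n := by
      apply ((summable_nat_add_iff 1).mpr hS).congr
      intro n
      rw [show n+1-1 = n from rfl]
      push_cast
      ring
    have h2 : Summable fun n => (θ * Bc θ p n * (n:ℂ)) * w^n :=
      (hS.mul_left (θ*w)).congr hcong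
    have h3 : Summable fun n => (θ * p * Bc θ p n) * w^n :=
      (hG.mul_left (θ*p)).congr (fun n => by ring)
    have E1 : (∑' n, Bc θ p n * ((n:ℂ) * w^(n-1)))
        = ∑' n, (Bc θ p (n+1) * (((n+1:ℕ)):ℂ)) * w^n := by
      rw [hS.tsum_eq_zero_add]
      simp only [Nat.cast_zero, zero_mul, mul_zero, zero_add]
      apply tsum_congr
      intro n
      rw [show n+1-1 = n from rfl]
      push_cast
      ring
    have E2 : (θ*w) * (∑' n, Bc θ p n * ((n:ℂ) * w^(n-1)))
        = ∑' n, (θ * Bc θ p n * (n:ℂ)) * w^n := by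
      rw [← tsum_mul_left]
      exact tsum_congr hcong
    have E3 : θ*p*(∑' n, Bc θ p n * w^n) = ∑' n, (θ * p * Bc θ p n) * w^n := by
      rw [← tsum_mul_left]
      exact tsum_congr (fun n => by ring)
    have expand : (1 - θ*w) * (∑' n, Bc θ p n * ((n:ℂ) * w^(n-1))) + θ*p*(∑' n, Bc θ p n * w^n)
        = ∑' n, ((Bc θ p (n+1) * (((n+1:ℕ)):ℂ)) - (θ * Bc θ p n * (n:ℂ))
            + (θ * p * Bc θ p n)) * w^n := by
      rw [sub_mul, one_mul, E2, E1, E3, ← h1.tsum_sub h2, ← (h1.sub h2).tsum_add h3]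
      apply tsum_congr
      intro n
      ring
    rw [expand]
    have hterm : ∀ n : ℕ, ((Bc θ p (n+1) * (((n+1:ℕ)):ℂ)) - (θ * Bc θ p n * (n:ℂ))
        + (θ * p * Bc θ p n)) * w^n = 0 := by
      intro n
      have h := Bc_rec θ p n
      push_cast
      linear_combination w^n * h
    simp only [hterm]
    exact tsum_zero
  -- the quotient function is constant
  intro y hy
  set ψ : ℂ → ℂ := fun w => (∑' n, Bc θ p n * w^n) * (1 - θ*w)^(-p) with hψ
  have hψd : ∀ w ∈ Metric.ball (0:ℂ) s, HasDerivAt ψ 0 w := by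
    intro w hw
    obtain ⟨hslit, hne⟩ := slit hθ hsθ hw
    have hw1 : HasDerivAt (fun z : ℂ => 1 - θ*z) (-θ) w := by
      simpa using ((hasDerivAt_id w).const_mul θ).const_sub 1
    have hcp : HasDerivAt (fun z : ℂ => (1 - θ*z)^(-p))
        ((-p) * (1 - θ*w)^(-p-1) * (-θ)) w := hw1.cpow_const hslit
    have total := (hasDeriv w hw).mul hcp
    have hsplit : (1 - θ*w)^(-p) = (1 - θ*w)^(-p-1) * (1 - θ*w) := by
      have h := Complex.cpow_add (x := 1 - θ*w) (-p-1) 1 hne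
      rw [Complex.cpow_one, show -p-1+1 = -p by ring] at h
      exact h
    have h0 : (∑' n, Bc θ p n * ((n:ℂ) * w^(n-1))) * (1 - θ*w)^(-p)
        + (∑' n, Bc θ p n * w^n) * ((-p) * (1 - θ*w)^(-p-1) * (-θ)) = 0 := by
      rw [hsplit]
      linear_combination ((1 - θ*w)^(-p-1)) * (KEY w hw)
    rw [h0] at total
    exact total
  have hconst : ψ y = ψ 0 := by
    apply Convex.is_const_of_fderivWithin_eq_zero (convex_ball (0:ℂ) s)
      (fun w hw => ((hψd w hw).differentiableAt).differentiableWithinAt) _ hy hball0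
    intro w hw
    rw [fderivWithin_of_isOpen Metric.isOpen_ball hw]
    have := ((hψd w hw).hasFDerivAt).fderiv
    rw [this]
    ext1
    simp
  have hψ0 : ψ 0 = 1 := by
    rw [hψ]
    simp only
    have : (∑' n, Bc θ p n * (0:ℂ)^n) = 1 := by
      rw [tsum_eq_single 0 (fun n hn => by simp [zero_pow hn])]
      simp [Bc]
    rw [this, mul_zero, sub_zero, Complex.one_cpow, one_mul]
  obtain ⟨hslit, hne⟩ := slit hθ hsθ hy
  have hpow_ne : (1 - θ*y)^p ≠ 0 := by
    rw [Complex.cpow_def_of_ne_zero hne]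
    exact Complex.exp_ne_zero _
  have hfin := hconst
  rw [hψ0] at hfin
  simp only [hψ] at hfin
  rw [Complex.cpow_neg, ← div_eq_mul_inv, div_eq_one_iff_eq hpow_ne] at hfin
  exact hfin


lemma SH (hc : ∀ n : ℕ, -c ≠ (n : ℂ)) {z : ℂ} (hz : ‖z‖ < 1) :
    Summable fun n => ‖Hc a b c n * z^n‖ := by
  apply summable_norm_ratio
    (q := fun n : ℕ => z * ((a + n)/(c + n) * ((b + n)/(1 + n)))) (l := ‖z‖)
  · intro n
    have h2 := cn_ne hc n
    have h4 := natC_ne n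
    have h4' : (1:ℂ) + (n:ℂ) ≠ 0 := by rw [add_comm]; exact natC_ne n
    rw [pow_succ, Hc_succ hc n]
    field_simp
    ring
  · have := (((tendsto_quot a c).mul (tendsto_quot b 1)).const_mul z).norm
    simpa using this
  · exact hz

lemma conv_sum (n : ℕ) (z : ℂ) :
    ∑ k ∈ Finset.range (n+1), (Bc θ p k * z^k) * (Hc a b c (n-k) * z^(n-k))
      = Vc a b c θ p n * z^n := by
  rw [Vc, Finset.sum_mul]
  apply Finset.sum_congr rfl
  intro k hk
  have hk' : k ≤ n := Nat.lt_succ_iff.mp (Finset.mem_range.mp hk)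
  have hz : z^k * z^(n-k) = z^n := by rw [← pow_add, Nat.add_sub_cancel' hk']
  calc (Bc θ p k * z^k) * (Hc a b c (n-k) * z^(n-k))
      = Bc θ p k * Hc a b c (n-k) * (z^k * z^(n-k)) := by ring
    _ = Bc θ p k * Hc a b c (n-k) * z^n := by rw [hz]

lemma Hc_one : Hc a b c 1 = a*b/c := by
  rw [Hc]
  simp [ascPochhammer_one]

lemma Vc_zero : Vc a b c θ p 0 = 1 := by
  rw [Vc]
  simp [show Bc θ p 0 = 1 from rfl, Hc_zero]

lemma Vc_one : Vc a b c θ p 1 = a*b/c - θ*p := by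
  have hB1 := Bc_succ θ p 0
  simp only [Nat.cast_zero, zero_sub, zero_add, div_one, mul_one] at hB1
  rw [Vc, Finset.sum_range_succ, Finset.sum_range_one]
  simp only [Nat.sub_self, Nat.sub_zero, Hc_zero, Hc_one,
    show Bc θ p 0 = 1 from rfl, hB1, show (0+1 : ℕ) = 1 from rfl]
  ring

lemma Vc_two (hc : ∀ n : ℕ, -c ≠ (n : ℂ)) :
    Vc a b c θ p 2 = -(a * b * θ * p) / c + a * (a + 1) * b * (b + 1) / (2 * c * (c + 1))
      + θ ^ 2 * (p - 1) * p / 2 := by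
  have hc0 : c ≠ 0 := by have := cn_ne hc 0; simpa using this
  have hc1 : c + 1 ≠ 0 := by have := cn_ne hc 1; push_cast at this; exact this
  have hB1 := Bc_succ θ p 0
  simp only [Nat.cast_zero, zero_sub, zero_add, div_one, mul_one] at hB1
  have hB2 := Bc_succ θ p 1
  rw [hB1] at hB2
  push_cast at hB2
  have hH2 := Hc_succ (a := a) (b := b) hc 1
  rw [Hc_one] at hH2
  push_cast at hH2
  rw [Vc, Finset.sum_range_succ, Finset.sum_range_succ, Finset.sum_range_one]
  simp only [Nat.sub_self, Nat.sub_zero, Hc_zero, Hc_one,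
    show Bc θ p 0 = 1 from rfl, show (2-1 : ℕ) = 1 from rfl,
    show (0+1 : ℕ) = 1 from rfl, show (1+1 : ℕ) = 2 from rfl, hB1, hB2, hH2]
  field_simp
  ring

end Stmt15Aux2


open Stmt15Aux2

theorem stmt15 (a b c θ p : ℂ) (hc : ∀ n : ℕ, -c ≠ (n : ℂ)) (hθ : θ ≠ 0)
    (u : ℕ → ℂ)
    (hu : ∀ z : ℂ, ‖z‖ < min 1 (1 / ‖θ‖) →
      (1 - θ * z) ^ p * F a b c z = ∑' n : ℕ, u n * z ^ n) :
    u 0 = 1 ∧ u 1 = a * b / c - θ * p ∧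
    u 2 = -(a * b * θ * p) / c + a * (a + 1) * b * (b + 1) / (2 * c * (c + 1)) + θ ^ 2 * (p - 1) * p / 2 ∧
    ∀ n : ℕ, 2 ≤ n →
      u (n + 1) =
        ((a + (n : ℂ)) * (b + (n : ℂ)) + 2 * θ * (n : ℂ) * (c + (n : ℂ) - 1) - θ * p * (c + 2 * (n : ℂ))) /
            (((n : ℂ) + 1) * (c + (n : ℂ))) * u n
        + θ * (a * (p - 2 * (b + (n : ℂ) - 1)) + b * (-2 * (n : ℂ) + p + 2) + (c - 2) * θ
            - ((n : ℂ) - p) * (θ * (c + (n : ℂ) - p - 3) + 2 * (n : ℂ)) + 4 * (n : ℂ) - p - 2) /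
            (((n : ℂ) + 1) * (c + (n : ℂ))) * u (n - 1)
        + θ ^ 2 * (a + (n : ℂ) - p - 2) * (b + (n : ℂ) - p - 2) /
            (((n : ℂ) + 1) * (c + (n : ℂ))) * u (n - 2) := by
  classical
  have hθn : (0:ℝ) < ‖θ‖ := norm_pos_iff.mpr hθ
  have hm0 : 0 < min 1 (1/‖θ‖) := lt_min one_pos (by positivity)
  set s : ℝ := min 1 (1/‖θ‖) / 2 with hsdef
  have hs0 : 0 < s := by positivity
  have hslt : s < min 1 (1/‖θ‖) := half_lt_self hm0
  have hs1 : s < 1 := lt_of_lt_of_le hslt (min_le_left _ _)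
  have hsinv : s < 1/‖θ‖ := lt_of_lt_of_le hslt (min_le_right _ _)
  have hsθ : ‖θ‖ * s < 1 := by
    have h := mul_lt_mul_of_pos_left hsinv hθn
    rwa [mul_one_div, div_self (ne_of_gt hθn)] at h
  have hball : ∀ z : ℂ, ‖z‖ < s → z ∈ Metric.ball (0:ℂ) s := fun z hz => by
    simpa [Metric.mem_ball, dist_zero_right] using hz
  have hnormθ : ∀ z : ℂ, ‖z‖ < s → ‖θ * z‖ < 1 := by
    intro z hz
    rw [norm_mul]
    calc ‖θ‖ * ‖z‖ ≤ ‖θ‖ * s := mul_le_mul_of_nonneg_left hz.le (norm_nonneg _)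
      _ < 1 := hsθ
  have hprod : ∀ z : ℂ, ‖z‖ < s →
      (1 - θ*z)^p * F a b c z = ∑' n, Vc a b c θ p n * z^n := by
    intro z hz
    have hB := SB (θ := θ) (p := p) (hnormθ z hz)
    have hH := SH (a := a) (b := b) hc (hz.trans hs1)
    rw [show F a b c z = ∑' n, Hc a b c n * z^n from rfl]
    rw [← binom_eq hθ hs0 hsθ z (hball z hz)]
    rw [tsum_mul_tsum_eq_tsum_sum_range_of_summable_norm hB hH]
    exact tsum_congr fun n => conv_sum n z
  have huv : ∀ z : ℂ, ‖z‖ < s → (∑' n, u n * z^n) = ∑' n, Vc a b c θ p n * z^n := by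
    intro z hz
    rw [← hu z (hz.trans hslt), hprod z hz]
  -- the v-series has positive radius
  set PV : FormalMultilinearSeries ℂ ℂ ℂ :=
    FormalMultilinearSeries.ofScalars ℂ (Vc a b c θ p) with hPVdef
  set t0 : ℝ := s/2 with ht0def
  have ht0 : 0 < t0 := by positivity
  have ht0s : t0 < s := half_lt_self hs0
  have ht0n : ‖(t0:ℂ)‖ < s := by
    rwa [Complex.norm_real, Real.norm_of_nonneg ht0.le]
  have hVnorm : Summable fun n => ‖Vc a b c θ p n‖ * t0^n := by
    have hBt := SB (θ := θ) (p := p) (hnormθ (t0:ℂ) ht0n)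
    have hHt := SH (a := a) (b := b) hc (ht0n.trans hs1)
    have h := summable_norm_sum_mul_range_of_summable_norm hBt hHt
    apply h.congr
    intro n
    rw [conv_sum n (t0:ℂ), norm_mul, norm_pow, Complex.norm_real, Real.norm_of_nonneg ht0.le]
  have hle : (t0.toNNReal : ENNReal) ≤ PV.radius := by
    apply PV.le_radius_of_summable
    apply hVnorm.congr
    intro n
    rw [hPVdef, FormalMultilinearSeries.ofScalars_norm, Real.coe_toNNReal _ ht0.le]
  have hrpos : 0 < PV.radius :=
    lt_of_lt_of_le (ENNReal.coe_pos.mpr (Real.toNNReal_pos.mpr ht0)) hle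
  have HV := PV.hasFPowerSeriesOnBall hrpos
  have hVsum_eq : ∀ z : ℂ, PV.sum z = ∑' n, Vc a b c θ p n * z^n := by
    intro z
    calc PV.sum z = ∑' n, PV n (fun _ => z) := rfl
      _ = ∑' n, Vc a b c θ p n * z^n := tsum_congr fun n => by
          rw [hPVdef, FormalMultilinearSeries.ofScalars_apply_eq, smul_eq_mul]
  have hPV0 : PV.sum 0 = 1 := by
    rw [hVsum_eq 0, tsum_eq_single 0 (fun n hn => by simp [zero_pow hn])]
    simp [Vc_zero]
  have hev : ∀ᶠ z in 𝓝 (0:ℂ), PV.sum z ≠ 0 :=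
    (HV.hasFPowerSeriesAt.continuousAt).eventually_ne (by rw [hPV0]; exact one_ne_zero)
  obtain ⟨ε, hε0, hεball⟩ := Metric.eventually_nhds_iff.mp hev
  set t1 : ℝ := min ε s / 2 with ht1def
  have ht1 : 0 < t1 := by positivity
  have ht1ε : t1 < ε := lt_of_lt_of_le (half_lt_self (lt_min hε0 hs0)) (min_le_left _ _)
  have ht1s : t1 < s := lt_of_lt_of_le (half_lt_self (lt_min hε0 hs0)) (min_le_right _ _)
  have ht1n : ‖((t1:ℝ):ℂ)‖ = t1 := by
    rw [Complex.norm_real, Real.norm_of_nonneg ht1.le]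
  have hUsum : Summable fun n => u n * ((t1:ℝ):ℂ)^n := by
    by_contra hns
    have h0 := tsum_eq_zero_of_not_summable hns
    have h2 : PV.sum ((t1:ℝ):ℂ) ≠ 0 := by
      apply hεball
      rw [dist_zero_right, ht1n]
      exact ht1ε
    apply h2
    rw [hVsum_eq, ← huv ((t1:ℝ):ℂ) (by rw [ht1n]; exact ht1s), h0]
  set PU : FormalMultilinearSeries ℂ ℂ ℂ :=
    FormalMultilinearSeries.ofScalars ℂ u with hPUdef
  have hUrad : 0 < PU.radius := by
    have htend : Tendsto (fun n => ‖PU n‖ * ((t1.toNNReal : NNReal) : ℝ)^n) atTop (𝓝 0) := by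
      have h := hUsum.tendsto_atTop_zero.norm
      simp only [norm_zero] at h
      apply h.congr
      intro n
      rw [norm_mul, norm_pow, ht1n, hPUdef, FormalMultilinearSeries.ofScalars_norm,
        Real.coe_toNNReal _ ht1.le]
    have hle2 := PU.le_radius_of_tendsto htend
    exact lt_of_lt_of_le (ENNReal.coe_pos.mpr (Real.toNNReal_pos.mpr ht1)) hle2
  have HU := (PU.hasFPowerSeriesOnBall hUrad).hasFPowerSeriesAt
  have hUsum_eq : ∀ z : ℂ, PU.sum z = ∑' n, u n * z^n := by
    intro z
    calc PU.sum z = ∑' n, PU n (fun _ => z) := rfl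
      _ = ∑' n, u n * z^n := tsum_congr fun n => by
          rw [hPUdef, FormalMultilinearSeries.ofScalars_apply_eq, smul_eq_mul]
  have heq : PU.sum =ᶠ[𝓝 (0:ℂ)] PV.sum := by
    rw [Filter.eventuallyEq_iff_exists_mem]
    refine ⟨Metric.ball (0:ℂ) s, Metric.ball_mem_nhds _ hs0, ?_⟩
    intro z hz
    have hzn : ‖z‖ < s := by simpa [Metric.mem_ball, dist_zero_right] using hz
    rw [hUsum_eq, hVsum_eq, huv z hzn]
  have hPUV : PU = PV :=
    (HU.congr heq).eq_formalMultilinearSeries HV.hasFPowerSeriesAt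
  have huVc : ∀ n, u n = Vc a b c θ p n := by
    have hinj := FormalMultilinearSeries.ofScalars_series_injective (𝕜 := ℂ) (E := ℂ)
    have := hinj (hPUdef ▸ hPVdef ▸ hPUV)
    exact fun n => congrFun this n
  refine ⟨?_, ?_, ?_, ?_⟩
  · rw [huVc 0, Vc_zero]
  · rw [huVc 1, Vc_one]
  · rw [huVc 2, Vc_two hc]
  · intro n hn
    rw [huVc (n+1), huVc n, huVc (n-1), huVc (n-2)]
    exact Vc_rec hc n hn
end

section
/- Let p ∈ ℂ. Define the sequence (u_n) by the expansion e^{pz} K(√z) = (π/2) ∑_{n=0}^∞ u_n z^n for |z| < 1, i.e. u_n = ∑_{k=0}^{n} (p^k/k!) · ((1/2)_{n−k})² / ((n−k)!)². Then u_0 = 1, u_1 = (4p+1)/4, u_2 = (32p² + 16p + 9)/64, and for all n ≥ 2, u_{n+1} = ((2n+1)(2n+4p+1)/(4(n+1)²)) u_n − (p(2n+p)/(n+1)²) u_{n−1} + (p²/(n+1)²) u_{n−2}. -/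
open Complex Finset Polynomial

noncomputable def cc (m : ℕ) : ℂ :=
  ((ascPochhammer ℂ m).eval ((1 : ℂ) / 2)) ^ 2 / (Nat.factorial m : ℂ) ^ 2

noncomputable def ee (p : ℂ) (k : ℕ) : ℂ := p ^ k / (Nat.factorial k : ℂ)

lemma fact_ne (m : ℕ) : (Nat.factorial m : ℂ) ≠ 0 := by
  exact_mod_cast Nat.cast_ne_zero.mpr m.factorial_ne_zero

lemma cR (m : ℕ) : ((m : ℂ) + 1) ^ 2 * cc (m + 1) = ((m : ℂ) + 1 / 2) ^ 2 * cc m := by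
  unfold cc
  rw [ascPochhammer_succ_eval, Nat.factorial_succ]
  have h1 := fact_ne m
  have h2 : ((m : ℂ) + 1) ≠ 0 := Nat.cast_add_one_ne_zero m
  push_cast
  field_simp
  ring

lemma eR (p : ℂ) (k : ℕ) : ((k : ℂ) + 1) * ee p (k + 1) = p * ee p k := by
  unfold ee
  rw [Nat.factorial_succ]
  have h1 := fact_ne k
  have h2 : ((k : ℂ) + 1) ≠ 0 := Nat.cast_add_one_ne_zero k
  push_cast
  field_simp
  ring

lemma stepA (p : ℂ) (N : ℕ) :
    ∑ k ∈ Finset.range (N + 2), (k : ℂ) * (ee p k * cc (N + 1 - k))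
      = p * ∑ k ∈ Finset.range (N + 1), ee p k * cc (N - k) := by
  rw [Finset.sum_range_succ', Finset.mul_sum]
  simp only [Nat.cast_zero, zero_mul, add_zero, Nat.succ_sub_succ]
  refine Finset.sum_congr rfl fun i _ => ?_
  have h := eR p i
  push_cast
  calc ((i : ℂ) + 1) * (ee p (i + 1) * cc (N - i))
      = (((i : ℂ) + 1) * ee p (i + 1)) * cc (N - i) := by ring
    _ = (p * ee p i) * cc (N - i) := by rw [h]
    _ = p * (ee p i * cc (N - i)) := by ring

lemma stepB (p : ℂ) (N : ℕ) :
    ∑ k ∈ Finset.range (N + 2), (k : ℂ) * ((k : ℂ) - 1) * (ee p k * cc (N + 1 - k))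
      = p * ∑ k ∈ Finset.range (N + 1), (k : ℂ) * (ee p k * cc (N - k)) := by
  rw [Finset.sum_range_succ', Finset.mul_sum]
  simp only [Nat.cast_zero, zero_mul, add_zero, Nat.succ_sub_succ]
  refine Finset.sum_congr rfl fun i _ => ?_
  have h := eR p i
  push_cast
  calc ((i : ℂ) + 1) * ((i : ℂ) + 1 - 1) * (ee p (i + 1) * cc (N - i))
      = (i : ℂ) * ((((i : ℂ) + 1) * ee p (i + 1)) * cc (N - i)) := by ring
    _ = (i : ℂ) * ((p * ee p i) * cc (N - i)) := by rw [h]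
    _ = p * ((i : ℂ) * (ee p i * cc (N - i))) := by ring

lemma stepC (p : ℂ) (N : ℕ) :
    ∑ k ∈ Finset.range (N + 2), ((N : ℂ) + 1 - k) ^ 2 * (ee p k * cc (N + 1 - k))
      = ∑ k ∈ Finset.range (N + 1), ((N : ℂ) - k + 1 / 2) ^ 2 * (ee p k * cc (N - k)) := by
  rw [Finset.sum_range_succ]
  have hz : ((N : ℂ) + 1 - (↑(N + 1) : ℂ)) ^ 2 = 0 := by push_cast; ring
  rw [hz, zero_mul, add_zero]
  refine Finset.sum_congr rfl fun k hk => ?_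
  have hkN : k ≤ N := Nat.lt_succ_iff.mp (Finset.mem_range.mp hk)
  have h1 : N + 1 - k = (N - k) + 1 := by omega
  have h2 : ((N - k : ℕ) : ℂ) = (N : ℂ) - k := by
    push_cast [Nat.cast_sub hkN]; ring
  have h := cR (N - k)
  rw [h2] at h
  have h3 : ((N : ℂ) + 1 - k) = ((N : ℂ) - k) + 1 := by ring
  rw [h1, h3]
  calc (((N : ℂ) - k) + 1) ^ 2 * (ee p k * cc ((N - k) + 1))
      = ee p k * ((((N : ℂ) - k) + 1) ^ 2 * cc ((N - k) + 1)) := by ring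
    _ = ee p k * (((N : ℂ) - k + 1 / 2) ^ 2 * cc (N - k)) := by rw [h]
    _ = ((N : ℂ) - k + 1 / 2) ^ 2 * (ee p k * cc (N - k)) := by ring

lemma norm_cc_le_one (m : ℕ) : ‖cc m‖ ≤ 1 := by
  induction m with
  | zero =>
    simp [cc, ascPochhammer_zero, Nat.factorial]
  | succ m ih =>
    have key : cc (m + 1) = (((m : ℂ) + 1 / 2) ^ 2 / ((m : ℂ) + 1) ^ 2) * cc m := by
      have h := cR m
      have hne : ((m : ℂ) + 1) ≠ 0 := Nat.cast_add_one_ne_zero m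
      rw [div_mul_eq_mul_div, eq_div_iff (pow_ne_zero 2 hne)]
      linear_combination h
    rw [key, norm_mul]
    have h1 : ‖((m : ℂ) + 1 / 2) ^ 2 / ((m : ℂ) + 1) ^ 2‖ ≤ 1 := by
      rw [norm_div, norm_pow, norm_pow]
      have hm : ‖(m : ℂ) + 1 / 2‖ ≤ (m : ℝ) + 1 := by
        calc ‖(m : ℂ) + 1 / 2‖ ≤ ‖(m : ℂ)‖ + ‖(1 / 2 : ℂ)‖ := norm_add_le _ _
          _ ≤ (m : ℝ) + 1 := by
            rw [Complex.norm_natCast]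
            norm_num
      have hm1 : ‖(m : ℂ) + 1‖ = (m : ℝ) + 1 := by
        have h : (m : ℂ) + 1 = ((m + 1 : ℕ) : ℂ) := by push_cast; ring
        rw [h, Complex.norm_natCast]; push_cast; ring
      rw [hm1]
      have hpos : (0 : ℝ) < ((m : ℝ) + 1) ^ 2 := by positivity
      rw [div_le_one hpos]
      nlinarith [norm_nonneg ((m : ℂ) + 1 / 2)]
    calc ‖((m : ℂ) + 1 / 2) ^ 2 / ((m : ℂ) + 1) ^ 2‖ * ‖cc m‖
        ≤ 1 * 1 := mul_le_mul h1 ih (norm_nonneg _) (by norm_num)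
      _ = 1 := by norm_num

theorem stmt17 (p : ℂ)
    (u : ℕ → ℂ)
    (hu : ∀ n : ℕ, u n = ∑ k ∈ Finset.range (n + 1),
      p ^ k / (Nat.factorial k : ℂ) *
        (((ascPochhammer ℂ (n - k)).eval ((1 : ℂ) / 2)) ^ 2 / (Nat.factorial (n - k) : ℂ) ^ 2)) :
    (∀ z : ℂ, ‖z‖ < 1 →
      Complex.exp (p * z) * ((Real.pi : ℂ) / 2 * F (1 / 2) (1 / 2) 1 z)
        = (Real.pi : ℂ) / 2 * ∑' n : ℕ, u n * z ^ n) ∧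
    u 0 = 1 ∧ u 1 = (4 * p + 1) / 4 ∧ u 2 = (32 * p ^ 2 + 16 * p + 9) / 64 ∧
    ∀ n : ℕ, 2 ≤ n →
      u (n + 1) = (2 * (n : ℂ) + 1) * (2 * (n : ℂ) + 4 * p + 1) / (4 * ((n : ℂ) + 1) ^ 2) * u n
        - p * (2 * (n : ℂ) + p) / (((n : ℂ) + 1) ^ 2) * u (n - 1)
        + p ^ 2 / (((n : ℂ) + 1) ^ 2) * u (n - 2) := by
  have hu' : ∀ n : ℕ, u n = ∑ k ∈ Finset.range (n + 1), ee p k * cc (n - k) := by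
    intro n; rw [hu n]; rfl
  refine ⟨?_, ?_, ?_, ?_, ?_⟩
  · -- the generating function identity
    intro z hz
    have hexp : Complex.exp (p * z) = ∑' k : ℕ, ee p k * z ^ k := by
      have h0 : Complex.exp (p * z) = ∑' n : ℕ, (p * z) ^ n / (n.factorial : ℂ) := by
        rw [Complex.exp_eq_exp_ℂ, NormedSpace.exp_eq_tsum_div]
      rw [h0]
      apply tsum_congr
      intro k
      unfold ee
      rw [mul_pow]
      ring
    have hF : F (1 / 2) (1 / 2) 1 z = ∑' m : ℕ, cc m * z ^ m := by
      unfold F cc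
      congr 1
      funext m
      rw [ascPochhammer_eval_one]
      ring
    have hsf : Summable fun k : ℕ => ‖ee p k * z ^ k‖ := by
      have hn : ∀ k : ℕ, ‖ee p k * z ^ k‖ = (‖p‖ * ‖z‖) ^ k / (k.factorial : ℝ) := by
        intro k
        unfold ee
        rw [norm_mul, norm_div, norm_pow, norm_pow, mul_pow, Complex.norm_natCast]
        ring
      rw [funext hn]
      exact Real.summable_pow_div_factorial _
    have hsg : Summable fun m : ℕ => ‖cc m * z ^ m‖ := by
      apply Summable.of_nonneg_of_le (fun m => norm_nonneg _)
        (fun m => ?_) (summable_geometric_of_lt_one (norm_nonneg z) hz)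
      rw [norm_mul, norm_pow]
      calc ‖cc m‖ * ‖z‖ ^ m ≤ 1 * ‖z‖ ^ m :=
            mul_le_mul_of_nonneg_right (norm_cc_le_one m) (by positivity)
        _ = ‖z‖ ^ m := by ring
    have hprod := tsum_mul_tsum_eq_tsum_sum_range_of_summable_norm hsf hsg
    rw [hexp, hF]
    rw [mul_comm (∑' k : ℕ, ee p k * z ^ k) _, mul_assoc, mul_comm (∑' m : ℕ, cc m * z ^ m) _,
      hprod]
    congr 1
    apply tsum_congr
    intro n
    rw [hu' n, Finset.sum_mul]
    refine Finset.sum_congr rfl fun k hk => ?_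
    have hkn : k ≤ n := Nat.lt_succ_iff.mp (Finset.mem_range.mp hk)
    have hz : z ^ k * z ^ (n - k) = z ^ n := by
      rw [← pow_add]
      congr 1
      omega
    calc ee p k * z ^ k * (cc (n - k) * z ^ (n - k))
        = ee p k * cc (n - k) * (z ^ k * z ^ (n - k)) := by ring
      _ = ee p k * cc (n - k) * z ^ n := by rw [hz]
  · rw [hu' 0]
    simp [cc, ee, ascPochhammer_zero, Nat.factorial]
  · rw [hu' 1]
    simp [Finset.sum_range_succ, cc, ee, ascPochhammer_one, Nat.factorial]
    ring
  · rw [hu' 2]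
    simp [Finset.sum_range_succ, cc, ee, ascPochhammer_succ_eval, ascPochhammer_zero,
      Nat.factorial]
    norm_num
    ring
  · intro n hn
    obtain ⟨m, rfl⟩ : ∃ m, n = m + 2 := ⟨n - 2, by omega⟩
    have hu3 : u (m + 2 + 1) = ∑ k ∈ Finset.range (m + 4), ee p k * cc (m + 3 - k) :=
      hu' (m + 3)
    have hu2 : u (m + 2) = ∑ k ∈ Finset.range (m + 3), ee p k * cc (m + 2 - k) := hu' (m + 2)
    have hu1 : u (m + 2 - 1) = ∑ k ∈ Finset.range (m + 2), ee p k * cc (m + 1 - k) :=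
      hu' (m + 1)
    have hu0 : u (m + 2 - 2) = ∑ k ∈ Finset.range (m + 1), ee p k * cc (m - k) := hu' m
    have hA2 : ∑ k ∈ Finset.range (m + 4), (k : ℂ) * (ee p k * cc (m + 3 - k))
        = p * ∑ k ∈ Finset.range (m + 3), ee p k * cc (m + 2 - k) := stepA p (m + 2)
    have hA1 : ∑ k ∈ Finset.range (m + 3), (k : ℂ) * (ee p k * cc (m + 2 - k))
        = p * ∑ k ∈ Finset.range (m + 2), ee p k * cc (m + 1 - k) := stepA p (m + 1)
    have hA0 : ∑ k ∈ Finset.range (m + 2), (k : ℂ) * (ee p k * cc (m + 1 - k))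
        = p * ∑ k ∈ Finset.range (m + 1), ee p k * cc (m - k) := stepA p m
    have hB2 : ∑ k ∈ Finset.range (m + 4), (k : ℂ) * ((k : ℂ) - 1) * (ee p k * cc (m + 3 - k))
        = p * ∑ k ∈ Finset.range (m + 3), (k : ℂ) * (ee p k * cc (m + 2 - k)) := stepB p (m + 2)
    have hB1 : ∑ k ∈ Finset.range (m + 3), (k : ℂ) * ((k : ℂ) - 1) * (ee p k * cc (m + 2 - k))
        = p * ∑ k ∈ Finset.range (m + 2), (k : ℂ) * (ee p k * cc (m + 1 - k)) := stepB p (m + 1)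
    have hC := stepC p (m + 2)
    push_cast at hC
    have e1 : ((m : ℂ) + 3) ^ 2 * ∑ k ∈ Finset.range (m + 4), ee p k * cc (m + 3 - k)
        = (∑ k ∈ Finset.range (m + 4), ((m : ℂ) + 2 + 1 - k) ^ 2 * (ee p k * cc (m + 3 - k)))
          + (2 * (m : ℂ) + 5) * ∑ k ∈ Finset.range (m + 4), (k : ℂ) * (ee p k * cc (m + 3 - k))
          - ∑ k ∈ Finset.range (m + 4), (k : ℂ) * ((k : ℂ) - 1) * (ee p k * cc (m + 3 - k)) := by
      rw [Finset.mul_sum, Finset.mul_sum, ← Finset.sum_add_distrib, ← Finset.sum_sub_distrib]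
      exact Finset.sum_congr rfl fun k _ => by ring
    have e2 : ∑ k ∈ Finset.range (m + 3), ((m : ℂ) + 2 - k + 1 / 2) ^ 2 * (ee p k * cc (m + 2 - k))
        = ((m : ℂ) + 5 / 2) ^ 2 * (∑ k ∈ Finset.range (m + 3), ee p k * cc (m + 2 - k))
          - (2 * (m : ℂ) + 4) * ∑ k ∈ Finset.range (m + 3), (k : ℂ) * (ee p k * cc (m + 2 - k))
          + ∑ k ∈ Finset.range (m + 3), (k : ℂ) * ((k : ℂ) - 1) * (ee p k * cc (m + 2 - k)) := by
      rw [Finset.mul_sum, Finset.mul_sum, ← Finset.sum_sub_distrib, ← Finset.sum_add_distrib]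
      exact Finset.sum_congr rfl fun k _ => by ring
    have key : ((m : ℂ) + 3) ^ 2 * u (m + 2 + 1)
        = (((m : ℂ) + 5 / 2) ^ 2 + p * (2 * (m : ℂ) + 5)) * u (m + 2)
          - (p * (2 * (m : ℂ) + 4) + p ^ 2) * u (m + 2 - 1) + p ^ 2 * u (m + 2 - 2) := by
      rw [hu3, hu2, hu1, hu0]
      linear_combination e1 + hC + e2 + (2 * (m : ℂ) + 5) * hA2 - hB2
        - ((2 * (m : ℂ) + 4) + p) * hA1 + hB1 + p * hA0
    have hne : ((m : ℂ) + 3) ≠ 0 := by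
      have h' : (m + 3 : ℕ) ≠ 0 := by omega
      have h'' : ((m + 3 : ℕ) : ℂ) ≠ 0 := Nat.cast_ne_zero.mpr h'
      push_cast at h''
      exact h''
    simp only [show m + 2 - 1 = m + 1 from rfl, show m + 2 - 2 = m from rfl] at key ⊢
    push_cast
    have h9 : ((m : ℂ) + 2 + 1) = (m : ℂ) + 3 := by ring
    rw [h9]
    field_simp [hne]
    linear_combination (4 : ℂ) * key
end

section
/- Let p ∈ ℂ. Define the sequence (u_n) by the expansion e^{pz} E(√z) = (π/2) ∑_{n=0}^∞ u_n z^n for |z| < 1, i.e. u_n = ∑_{k=0}^{n} (p^k/k!) · (−1/2)_{n−k}(1/2)_{n−k} / ((n−k)!)². Then u_0 = 1, u_1 = (4p−1)/4, u_2 = (32p² − 16p − 3)/64, and for all n ≥ 2, u_{n+1} = ((2n+1)(2n+4p−1)/(4(n+1)²)) u_n − (p(2n+p−1)/(n+1)²) u_{n−1} + (p²/(n+1)²) u_{n−2}. -/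
open Complex Finset Polynomial

namespace Stmt18Aux

noncomputable def bb (m : ℕ) : ℂ :=
  (ascPochhammer ℂ m).eval (-(1 : ℂ) / 2) * (ascPochhammer ℂ m).eval ((1 : ℂ) / 2) /
    (Nat.factorial m : ℂ) ^ 2

noncomputable def aa (p : ℂ) (k : ℕ) : ℂ := p ^ k / (Nat.factorial k : ℂ)

noncomputable def sb (m : ℕ) : ℂ := (m : ℂ) * bb m

noncomputable def qb (m : ℕ) : ℂ := (m : ℂ) ^ 2 * bb m

noncomputable def uu (p : ℂ) (n : ℕ) : ℂ := ∑ k ∈ Finset.range (n + 1), aa p k * bb (n - k)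

noncomputable def tt (p : ℂ) (n : ℕ) : ℂ := ∑ k ∈ Finset.range (n + 1), aa p k * sb (n - k)

noncomputable def rr (p : ℂ) (n : ℕ) : ℂ := ∑ k ∈ Finset.range (n + 1), aa p k * qb (n - k)

lemma fact_ne (m : ℕ) : (Nat.factorial m : ℂ) ≠ 0 :=
  Nat.cast_ne_zero.mpr (Nat.factorial_ne_zero m)

lemma bb_rec (m : ℕ) : ((m : ℂ) + 1) ^ 2 * bb (m + 1) = ((m : ℂ) ^ 2 - 1 / 4) * bb m := by
  unfold bb
  rw [ascPochhammer_succ_eval, ascPochhammer_succ_eval, Nat.factorial_succ]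
  have h1 := fact_ne m
  have h2 : ((m : ℂ) + 1) ≠ 0 := by
    have := Nat.cast_ne_zero (R := ℂ).mpr (Nat.succ_ne_zero m)
    push_cast at this
    exact this
  push_cast
  field_simp
  ring

lemma qb_succ (m : ℕ) : qb (m + 1) = qb m - bb m / 4 := by
  have h := bb_rec m
  unfold qb
  push_cast
  linear_combination h

lemma aa_rec (p : ℂ) (k : ℕ) : ((k : ℂ) + 1) * aa p (k + 1) = p * aa p k := by
  unfold aa
  rw [Nat.factorial_succ]
  have h1 := fact_ne k
  have h2 : ((k : ℂ) + 1) ≠ 0 := by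
    have := Nat.cast_ne_zero (R := ℂ).mpr (Nat.succ_ne_zero k)
    push_cast at this
    exact this
  push_cast
  field_simp
  ring

lemma shift (p : ℂ) (g : ℕ → ℂ) (n : ℕ) :
    ∑ k ∈ Finset.range (n + 2), (k : ℂ) * (aa p k * g (n + 1 - k))
      = p * ∑ k ∈ Finset.range (n + 1), aa p k * g (n - k) := by
  rw [Finset.sum_range_succ']
  simp only [Nat.cast_zero, zero_mul, add_zero, Nat.succ_sub_succ]
  rw [Finset.mul_sum]
  refine Finset.sum_congr rfl fun k hk => ?_
  have h := aa_rec p k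
  push_cast
  linear_combination g (n - k) * h

lemma split (p : ℂ) (g : ℕ → ℂ) (n : ℕ) :
    ((n : ℂ) + 1) * ∑ k ∈ Finset.range (n + 2), aa p k * g (n + 1 - k)
      = p * (∑ k ∈ Finset.range (n + 1), aa p k * g (n - k))
        + ∑ k ∈ Finset.range (n + 2), aa p k * (((n + 1 - k : ℕ) : ℂ) * g (n + 1 - k)) := by
  rw [← shift p g n, Finset.mul_sum, ← Finset.sum_add_distrib]
  refine Finset.sum_congr rfl fun k hk => ?_
  have hk' : k ≤ n + 1 := Nat.lt_succ_iff.mp (Finset.mem_range.mp hk)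
  have hc : ((n + 1 - k : ℕ) : ℂ) = (n : ℂ) + 1 - (k : ℂ) := by
    rw [Nat.cast_sub hk']; push_cast; ring
  rw [hc]; ring

lemma key1 (p : ℂ) (n : ℕ) :
    ((n : ℂ) + 1) * uu p (n + 1) = p * uu p n + tt p (n + 1) := by
  have h := split p bb n
  unfold uu tt
  simpa [sb] using h

lemma key2 (p : ℂ) (n : ℕ) :
    ((n : ℂ) + 1) * tt p (n + 1) = p * tt p n + rr p (n + 1) := by
  have h := split p sb n
  unfold tt rr
  have hq : ∀ m : ℕ, (m : ℂ) * sb m = qb m := by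
    intro m; unfold sb qb; ring
  simpa [hq] using h

lemma key3 (p : ℂ) (n : ℕ) : rr p (n + 1) = rr p n - uu p n / 4 := by
  unfold rr uu
  rw [Finset.sum_range_succ]
  have h0 : qb (n + 1 - (n + 1)) = 0 := by simp [qb]
  rw [h0, mul_zero, add_zero, Finset.sum_div, ← Finset.sum_sub_distrib]
  refine Finset.sum_congr rfl fun k hk => ?_
  have hk' : k ≤ n := Nat.lt_succ_iff.mp (Finset.mem_range.mp hk)
  have h1 : n + 1 - k = (n - k) + 1 := by omega
  rw [h1, qb_succ]; ring

lemma key_rec (p : ℂ) (m : ℕ) :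
    ((m : ℂ) + 3) ^ 2 * uu p (m + 3) =
      (((m : ℂ) + 2) * ((m : ℂ) + 2 + p) + p * ((m : ℂ) + 3) - 1 / 4) * uu p (m + 2)
      - (p * ((m : ℂ) + 2 + p) + p * ((m : ℂ) + 1)) * uu p (m + 1)
      + p ^ 2 * uu p m := by
  have h1 := key1 p m
  have h2 := key1 p (m + 1)
  have h3 := key1 p (m + 2)
  have t1 := key2 p (m + 1)
  have t2 := key2 p (m + 2)
  have r1 := key3 p (m + 2)
  push_cast at h1 h2 h3 t1 t2 r1 ⊢
  linear_combination ((m : ℂ) + 3) * h3 + t2 + r1 - t1 - (p + (m : ℂ) + 2) * h2 + p * h1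

lemma poch_norm_le (x : ℂ) (hx : ‖x‖ ≤ 1) (m : ℕ) :
    ‖(ascPochhammer ℂ m).eval x‖ ≤ (Nat.factorial m : ℝ) := by
  induction m with
  | zero => simp
  | succ m ih =>
    rw [ascPochhammer_succ_eval, Nat.factorial_succ]
    push_cast
    calc ‖(ascPochhammer ℂ m).eval x * (x + (m : ℂ))‖
        = ‖(ascPochhammer ℂ m).eval x‖ * ‖x + (m : ℂ)‖ := norm_mul _ _
      _ ≤ (Nat.factorial m : ℝ) * (1 + (m : ℝ)) := by
          apply mul_le_mul ih ?_ (norm_nonneg _) (Nat.cast_nonneg _)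
          calc ‖x + (m : ℂ)‖ ≤ ‖x‖ + ‖(m : ℂ)‖ := norm_add_le _ _
            _ ≤ 1 + (m : ℝ) := by
                have : ‖(m : ℂ)‖ = (m : ℝ) := by
                  simp
                rw [this]; linarith
      _ = ((m : ℝ) + 1) * (Nat.factorial m : ℝ) := by ring

lemma bb_norm_le (m : ℕ) : ‖bb m‖ ≤ 1 := by
  have h1 : ‖(-(1 : ℂ) / 2)‖ ≤ 1 := by
    have : (-(1 : ℂ) / 2) = ((-(1 : ℝ) / 2 : ℝ) : ℂ) := by push_cast; ring
    rw [this, Complex.norm_real]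
    norm_num
  have h2 : ‖((1 : ℂ) / 2)‖ ≤ 1 := by
    have : ((1 : ℂ) / 2) = (((1 : ℝ) / 2 : ℝ) : ℂ) := by push_cast; ring
    rw [this, Complex.norm_real]
    norm_num
  have hf : (0 : ℝ) < (Nat.factorial m : ℝ) := by
    exact_mod_cast Nat.factorial_pos m
  unfold bb
  rw [norm_div, norm_mul, norm_pow]
  have hnf : ‖(Nat.factorial m : ℂ)‖ = (Nat.factorial m : ℝ) := by simp
  rw [hnf, div_le_one (by positivity)]
  calc ‖(ascPochhammer ℂ m).eval (-(1 : ℂ) / 2)‖ * ‖(ascPochhammer ℂ m).eval ((1 : ℂ) / 2)‖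
      ≤ (Nat.factorial m : ℝ) * (Nat.factorial m : ℝ) := by
        exact mul_le_mul (poch_norm_le _ h1 m) (poch_norm_le _ h2 m) (norm_nonneg _) hf.le
    _ = (Nat.factorial m : ℝ) ^ 2 := by ring

end Stmt18Aux

open Stmt18Aux in
theorem stmt18 (p : ℂ)
    (u : ℕ → ℂ)
    (hu : ∀ n : ℕ, u n = ∑ k ∈ Finset.range (n + 1),
      p ^ k / (Nat.factorial k : ℂ) *
        ((ascPochhammer ℂ (n - k)).eval (-(1 : ℂ) / 2) * (ascPochhammer ℂ (n - k)).eval ((1 : ℂ) / 2) /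
          (Nat.factorial (n - k) : ℂ) ^ 2)) :
    (∀ z : ℂ, ‖z‖ < 1 →
      Complex.exp (p * z) * ((Real.pi : ℂ) / 2 * F (-(1 : ℂ) / 2) (1 / 2) 1 z)
        = (Real.pi : ℂ) / 2 * ∑' n : ℕ, u n * z ^ n) ∧
    u 0 = 1 ∧ u 1 = (4 * p - 1) / 4 ∧ u 2 = (32 * p ^ 2 - 16 * p - 3) / 64 ∧
    ∀ n : ℕ, 2 ≤ n →
      u (n + 1) = (2 * (n : ℂ) + 1) * (2 * (n : ℂ) + 4 * p - 1) / (4 * ((n : ℂ) + 1) ^ 2) * u n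
        - p * (2 * (n : ℂ) + p - 1) / (((n : ℂ) + 1) ^ 2) * u (n - 1)
        + p ^ 2 / (((n : ℂ) + 1) ^ 2) * u (n - 2) := by
  have hu' : ∀ n : ℕ, u n = uu p n := by
    intro n
    rw [hu n]
    rfl
  refine ⟨?_, ?_, ?_, ?_, ?_⟩
  · -- analytic part
    intro z hz
    have ha : Summable fun n : ℕ => ‖aa p n * z ^ n‖ := by
      have := Real.summable_pow_div_factorial ‖p * z‖
      apply this.congr
      intro n
      unfold aa
      simp only [norm_mul, norm_div, norm_pow, Complex.norm_natCast]
      rw [mul_pow]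
      ring
    have hb : Summable fun n : ℕ => ‖bb n * z ^ n‖ := by
      apply Summable.of_nonneg_of_le (fun n => norm_nonneg _) ?_
        (summable_geometric_of_lt_one (norm_nonneg z) hz)
      intro n
      rw [norm_mul, norm_pow]
      exact mul_le_of_le_one_left (pow_nonneg (norm_nonneg z) n) (bb_norm_le n)
    have hexp : Complex.exp (p * z) = ∑' n : ℕ, aa p n * z ^ n := by
      rw [Complex.exp_eq_exp_ℂ, NormedSpace.exp_eq_tsum_div]
      refine tsum_congr fun n => ?_
      unfold aa
      rw [mul_pow]
      ring
    have hF : F (-(1 : ℂ) / 2) (1 / 2) 1 z = ∑' n : ℕ, bb n * z ^ n := by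
      unfold F bb
      refine tsum_congr fun n => ?_
      rw [ascPochhammer_eval_one]
      ring
    rw [hexp, hF]
    have hc := tsum_mul_tsum_eq_tsum_sum_range_of_summable_norm ha hb
    calc (∑' n : ℕ, aa p n * z ^ n) * ((Real.pi : ℂ) / 2 * ∑' n : ℕ, bb n * z ^ n)
        = (Real.pi : ℂ) / 2 * ((∑' n : ℕ, aa p n * z ^ n) * ∑' n : ℕ, bb n * z ^ n) := by ring
      _ = (Real.pi : ℂ) / 2 * ∑' n : ℕ, u n * z ^ n := by
          rw [hc]
          congr 1
          refine tsum_congr fun n => ?_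
          rw [hu' n]
          unfold uu
          rw [Finset.sum_mul]
          refine Finset.sum_congr rfl fun k hk => ?_
          have hk' : k ≤ n := Nat.lt_succ_iff.mp (Finset.mem_range.mp hk)
          have hzz : z ^ k * z ^ (n - k) = z ^ n := by
            rw [← pow_add]
            congr 1
            omega
          calc aa p k * z ^ k * (bb (n - k) * z ^ (n - k))
              = aa p k * bb (n - k) * (z ^ k * z ^ (n - k)) := by ring
            _ = aa p k * bb (n - k) * z ^ n := by rw [hzz]
  · rw [hu 0]
    simp
  · rw [hu 1]
    simp [Finset.sum_range_succ, ascPochhammer_succ_eval, Nat.factorial]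
    ring
  · rw [hu 2]
    simp [Finset.sum_range_succ, ascPochhammer_succ_eval, Nat.factorial]
    ring
  · intro n hn
    obtain ⟨m, rfl⟩ : ∃ m, n = m + 2 := ⟨n - 2, by omega⟩
    have e1 : m + 2 + 1 = m + 3 := by omega
    have e2 : m + 2 - 1 = m + 1 := by omega
    have e3 : m + 2 - 2 = m := by omega
    rw [e1, e2, e3, hu' (m + 3), hu' (m + 2), hu' (m + 1), hu' m]
    have hne : ((m : ℂ) + 2 + 1) ≠ 0 := by
      have h3 : ((m + 3 : ℕ) : ℂ) ≠ 0 := Nat.cast_ne_zero.mpr (by omega)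
      push_cast at h3
      intro h
      exact h3 (by linear_combination h)
    have hk := key_rec p m
    push_cast
    field_simp [hne]
    linear_combination 4 * hk
end

section
/- Let p, θ ∈ ℂ with θ ≠ 0. Define the sequence (u_n) by the expansion (1−θz)^p K(√z) = (π/2) ∑_{n=0}^∞ u_n z^n for |z| < min(1, 1/|θ|), where (1−θz)^p denotes the principal branch exp(p · Log(1−θz)). Then u_0 = 1, u_1 = (1 − 4θp)/4, u_2 = (32θ²p² − 32θ²p − 16θp + 9)/64, and for all n ≥ 2, u_{n+1} = α_0(n) u_n + α_1(n) u_{n−1} + α_2(n) u_{n−2}, where α_0(n) = (8θn(n−p) + (2n+1)² − 4θp)/(4(n+1)²), α_1(n) = −θ(2(θ+2)n² − 4(θ+1)n(p+1) + 2θ(p+1)² + 1)/(2(n+1)²), α_2(n) = θ²(−2n+2p+3)²/(4(n+1)²). -/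
open Complex Finset Polynomial

namespace S19

noncomputable def aseq (n : ℕ) : ℂ :=
  (ascPochhammer ℂ n).eval (1 / 2) * (ascPochhammer ℂ n).eval (1 / 2) /
    ((ascPochhammer ℂ n).eval 1 * (Nat.factorial n : ℂ))

noncomputable def bseq (p θ : ℂ) (k : ℕ) : ℂ :=
  θ ^ k * (ascPochhammer ℂ k).eval (-p) / (Nat.factorial k : ℂ)

noncomputable def cseq (p θ : ℂ) (n : ℕ) : ℂ :=
  ∑ k ∈ range (n + 1), bseq p θ k * aseq (n - k)

lemma aseq_zero : aseq 0 = 1 := by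
  simp [aseq]

lemma bseq_zero (p θ : ℂ) : bseq p θ 0 = 1 := by
  simp [bseq]

lemma factorial_cast_ne (n : ℕ) : ((Nat.factorial n : ℂ)) ≠ 0 := by
  exact_mod_cast Nat.cast_ne_zero.mpr (Nat.factorial_ne_zero n)

lemma asc_one_eval (n : ℕ) : (ascPochhammer ℂ n).eval 1 = (Nat.factorial n : ℂ) := by
  have := ascPochhammer_eval_one ℂ n
  simpa using this

lemma ha (n : ℕ) : 4 * ((n : ℂ) + 1) ^ 2 * aseq (n + 1) = (2 * (n : ℂ) + 1) ^ 2 * aseq n := by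
  unfold aseq
  rw [asc_one_eval, asc_one_eval, ascPochhammer_succ_eval, Nat.factorial_succ]
  have h1 : ((n : ℂ) + 1) ≠ 0 := Nat.cast_add_one_ne_zero n
  have h2 := factorial_cast_ne n
  push_cast
  field_simp
  ring

lemma hb (p θ : ℂ) (k : ℕ) :
    ((k : ℂ) + 1) * bseq p θ (k + 1) = θ * ((k : ℂ) - p) * bseq p θ k := by
  unfold bseq
  rw [ascPochhammer_succ_eval, Nat.factorial_succ]
  have h1 : ((k : ℂ) + 1) ≠ 0 := Nat.cast_add_one_ne_zero k
  have h2 := factorial_cast_ne k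
  push_cast
  field_simp
  ring

end S19

namespace S19

local notation "Dx" => PowerSeries.derivative ℂ
local notation "Cc" => PowerSeries.C (R := ℂ)
local notation "Y" => (PowerSeries.X : PowerSeries ℂ)

noncomputable def PA : PowerSeries ℂ := PowerSeries.mk aseq
noncomputable def PB (p θ : ℂ) : PowerSeries ℂ := PowerSeries.mk (bseq p θ)
noncomputable def PC (p θ : ℂ) : PowerSeries ℂ := PowerSeries.mk (cseq p θ)

lemma PC_eq (p θ : ℂ) : PC p θ = PB p θ * PA := by
  ext n
  rw [PC, PB, PA, PowerSeries.coeff_mul, Finset.Nat.sum_antidiagonal_eq_sum_range_succ_mk]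
  simp [cseq]

lemma hAode : 4 * (Y * Dx (Dx PA)) - 4 * (Y * (Y * Dx (Dx PA))) + 4 * Dx PA
    - 8 * (Y * Dx PA) - PA = 0 := by
  ext n
  rw [show (4 : PowerSeries ℂ) = Cc 4 from (map_ofNat _ 4).symm,
    show (8 : PowerSeries ℂ) = Cc 8 from (map_ofNat _ 8).symm]
  simp only [map_sub, map_add, PowerSeries.coeff_C_mul, map_zero]
  match n with
  | 0 =>
    simp only [PowerSeries.coeff_zero_X_mul, PowerSeries.coeff_derivative, PA,
      PowerSeries.coeff_mk]
    have := ha 0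
    push_cast at this ⊢
    linear_combination this
  | 1 =>
    simp only [PowerSeries.coeff_succ_X_mul, PowerSeries.coeff_zero_X_mul,
      PowerSeries.coeff_derivative, PA, PowerSeries.coeff_mk]
    have := ha 1
    push_cast at this ⊢
    linear_combination this
  | (n+2) =>
    simp only [PowerSeries.coeff_succ_X_mul, PowerSeries.coeff_derivative, PA,
      PowerSeries.coeff_mk]
    have := ha (n+2)
    push_cast at this ⊢
    linear_combination this

lemma hBode (p θ : ℂ) : Dx (PB p θ) - Cc θ * (Y * Dx (PB p θ)) + Cc θ * Cc p * PB p θ = 0 := by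
  ext n
  simp only [map_sub, map_add, mul_assoc, PowerSeries.coeff_C_mul, map_zero]
  match n with
  | 0 =>
    simp only [PowerSeries.coeff_zero_X_mul, PowerSeries.coeff_derivative, PB,
      PowerSeries.coeff_mk]
    have := hb p θ 0
    push_cast at this ⊢
    linear_combination this
  | (n+1) =>
    simp only [PowerSeries.coeff_succ_X_mul, PowerSeries.coeff_derivative, PB,
      PowerSeries.coeff_mk]
    have := hb p θ (n+1)
    push_cast at this ⊢
    linear_combination this

lemma h3ode (p θ : ℂ) : Dx (Dx (PB p θ)) - Cc θ * (Y * Dx (Dx (PB p θ)))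
    + (Cc θ * Cc p - Cc θ) * Dx (PB p θ) = 0 := by
  ext n
  simp only [map_sub, map_add, sub_mul, mul_assoc, PowerSeries.coeff_C_mul, map_zero]
  match n with
  | 0 =>
    simp only [PowerSeries.coeff_zero_X_mul, PowerSeries.coeff_derivative, PB,
      PowerSeries.coeff_mk]
    have := hb p θ 1
    push_cast at this ⊢
    linear_combination this
  | (n+1) =>
    simp only [PowerSeries.coeff_succ_X_mul, PowerSeries.coeff_derivative, PB,
      PowerSeries.coeff_mk]
    have := hb p θ (n+2)
    push_cast at this ⊢
    linear_combination ((n : ℂ) + 2) * this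

lemma leib (f g : PowerSeries ℂ) :
    Dx (f * g) = f * Dx g + g * Dx f := by
  simpa [smul_eq_mul] using (PowerSeries.derivative ℂ).leibniz f g

lemma keyid (p θ : ℂ) :
    (4 : ℂ) • (Y * Dx (Dx (PC p θ)))
    + (-(4 + 8 * θ)) • (Y * (Y * Dx (Dx (PC p θ))))
    + (8 * θ + 4 * θ ^ 2) • (Y * (Y * (Y * Dx (Dx (PC p θ)))))
    + (-(4 * θ ^ 2)) • (Y * (Y * (Y * (Y * Dx (Dx (PC p θ))))))
    + (4 : ℂ) • Dx (PC p θ)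
    + (-(8 + 8 * θ - 8 * θ * p)) • (Y * Dx (PC p θ))
    + (16 * θ - 8 * θ * p + 4 * θ ^ 2 - 8 * θ ^ 2 * p) • (Y * (Y * Dx (PC p θ)))
    + (-(8 * θ ^ 2) + 8 * θ ^ 2 * p) • (Y * (Y * (Y * Dx (PC p θ))))
    + (4 * θ * p - 1) • PC p θ
    + (2 * θ - 8 * θ * p + 4 * θ ^ 2 * p ^ 2) • (Y * PC p θ)
    + (-θ ^ 2 + 4 * θ ^ 2 * p - 4 * θ ^ 2 * p ^ 2) • (Y * (Y * PC p θ)) = 0 := by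
  have h1 : Dx (PC p θ) = PB p θ * Dx PA + PA * Dx (PB p θ) := by
    rw [PC_eq]; exact leib _ _
  have h2 : Dx (Dx (PC p θ)) = PB p θ * Dx (Dx PA) + 2 * (Dx PA * Dx (PB p θ))
      + PA * Dx (Dx (PB p θ)) := by
    rw [h1, map_add, leib, leib]; ring
  rw [h2, h1, PC_eq]
  simp only [PowerSeries.smul_eq_C_mul, map_add, map_sub, map_neg, map_mul, map_pow,
    map_ofNat, map_one]
  linear_combination
    ((1 - Cc θ * Y) * (1 - Cc θ * Y) * PB p θ) * hAode
    + (8 * Y * (1 - Y) * (1 - Cc θ * Y) * Dx PA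
       + 4 * (Cc θ * (Y * (1 - Y)) + Cc θ * Cc p * (Y * (1 - Y))
          + (1 - 2 * Y) * (1 - Cc θ * Y)) * PA) * hBode p θ
    + (4 * Y * (1 - Y) * (1 - Cc θ * Y) * PA) * h3ode p θ

end S19

namespace S19

lemma crec (p θ : ℂ) (n : ℕ) (hn : 2 ≤ n) :
    4 * ((n : ℂ) + 1) ^ 2 * cseq p θ (n + 1)
      = (8 * θ * (n : ℂ) * ((n : ℂ) - p) + (2 * (n : ℂ) + 1) ^ 2 - 4 * θ * p) * cseq p θ n
        - 2 * θ * (2 * (θ + 2) * (n : ℂ) ^ 2 - 4 * (θ + 1) * (n : ℂ) * (p + 1)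
            + 2 * θ * (p + 1) ^ 2 + 1) * cseq p θ (n - 1)
        + θ ^ 2 * (-2 * (n : ℂ) + 2 * p + 3) ^ 2 * cseq p θ (n - 2) := by
  obtain h2 | h3 | ⟨m, rfl⟩ : n = 2 ∨ n = 3 ∨ ∃ m, n = m + 1 + 1 + 1 + 1 := by
    rcases Nat.lt_or_ge n 4 with h | h
    · interval_cases n <;> simp
    · exact Or.inr (Or.inr ⟨n - 4, by omega⟩)
  · subst h2
    have hk := congrArg (PowerSeries.coeff (0 + 1 + 1)) (keyid p θ)
    simp only [map_add, map_zero, PowerSeries.coeff_smul, smul_eq_mul,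
      PowerSeries.coeff_succ_X_mul, PowerSeries.coeff_zero_X_mul,
      PowerSeries.coeff_derivative, PC, PowerSeries.coeff_mk] at hk
    norm_num at hk ⊢
    linear_combination hk
  · subst h3
    have hk := congrArg (PowerSeries.coeff (0 + 1 + 1 + 1)) (keyid p θ)
    simp only [map_add, map_zero, PowerSeries.coeff_smul, smul_eq_mul,
      PowerSeries.coeff_succ_X_mul, PowerSeries.coeff_zero_X_mul,
      PowerSeries.coeff_derivative, PC, PowerSeries.coeff_mk] at hk
    norm_num at hk ⊢
    linear_combination hk
  · have hk := congrArg (PowerSeries.coeff (m + 1 + 1 + 1 + 1)) (keyid p θ)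
    simp only [map_add, map_zero, PowerSeries.coeff_smul, smul_eq_mul,
      PowerSeries.coeff_succ_X_mul, PowerSeries.coeff_zero_X_mul,
      PowerSeries.coeff_derivative, PC, PowerSeries.coeff_mk] at hk
    rw [show m + 1 + 1 + 1 + 1 - 1 = m + 1 + 1 + 1 from by omega,
      show m + 1 + 1 + 1 + 1 - 2 = m + 1 + 1 from by omega]
    push_cast at hk ⊢
    linear_combination hk

end S19

namespace S19

lemma aux_sum {u : ℕ → ℝ} (hu : ∀ k, 0 ≤ u k) {C q : ℝ} (hC : 0 ≤ C) (hq0 : 0 ≤ q)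
    (hq : q < 1) (h : ∀ k, 1 ≤ k → u (k + 1) ≤ (((k : ℝ) + C) / k) * q * u k) :
    Summable u := by
  have hr1 : (1 + q) / 2 < 1 := by linarith
  apply summable_of_ratio_norm_eventually_le hr1
  obtain ⟨N0, hN0⟩ := exists_nat_gt (C * q / ((1 - q) / 2))
  filter_upwards [Filter.eventually_ge_atTop (max N0 1)] with k hk
  have hk1 : 1 ≤ k := le_trans (le_max_right _ _) hk
  have hkN : (N0 : ℝ) ≤ k := by exact_mod_cast le_trans (le_max_left _ _) hk
  have hkpos : (0 : ℝ) < k := by exact_mod_cast hk1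
  have key : (((k : ℝ) + C) / k) * q ≤ (1 + q) / 2 := by
    rw [div_mul_eq_mul_div, div_le_iff₀ hkpos]
    have h1 : C * q ≤ (k : ℝ) * ((1 - q) / 2) := by
      have h2 : C * q / ((1 - q) / 2) < (k : ℝ) := lt_of_lt_of_le hN0 hkN
      have h3 : (0 : ℝ) < (1 - q) / 2 := by linarith
      calc C * q = C * q / ((1 - q) / 2) * ((1 - q) / 2) := (div_mul_cancel₀ _ h3.ne').symm
      _ ≤ (k : ℝ) * ((1 - q) / 2) := by gcongr
    nlinarith
  rw [Real.norm_eq_abs, Real.norm_eq_abs, _root_.abs_of_nonneg (hu _), _root_.abs_of_nonneg (hu _)]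
  calc u (k + 1) ≤ (((k : ℝ) + C) / k) * q * u k := h k hk1
  _ ≤ (1 + q) / 2 * u k := by gcongr; exact hu k

lemma bseq_succ (p θ : ℂ) (k : ℕ) :
    bseq p θ (k + 1) = θ * ((k : ℂ) - p) * bseq p θ k / ((k : ℂ) + 1) := by
  have h1 : ((k : ℂ) + 1) ≠ 0 := Nat.cast_add_one_ne_zero k
  rw [eq_div_iff h1]
  linear_combination hb p θ k

lemma norm_natCast_add_one (k : ℕ) : ‖((k : ℂ) + 1)‖ = (k : ℝ) + 1 := by
  have : ((k : ℂ) + 1) = ((k + 1 : ℕ) : ℂ) := by push_cast; ring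
  rw [this, Complex.norm_natCast]
  push_cast; ring

lemma bseq_norm_ratio (p θ : ℂ) (k : ℕ) :
    ‖bseq p θ (k + 1)‖ ≤ (((k : ℝ) + ‖p‖) / ((k : ℝ) + 1)) * ‖θ‖ * ‖bseq p θ k‖ := by
  rw [bseq_succ, norm_div, norm_mul, norm_mul, norm_natCast_add_one]
  have h2 : ‖(k : ℂ) - p‖ ≤ (k : ℝ) + ‖p‖ := by
    calc ‖(k : ℂ) - p‖ ≤ ‖(k : ℂ)‖ + ‖p‖ := norm_sub_le _ _
    _ = (k : ℝ) + ‖p‖ := by rw [Complex.norm_natCast]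
  have h3 : (0 : ℝ) < (k : ℝ) + 1 := by positivity
  rw [div_le_iff₀ h3]
  calc ‖θ‖ * ‖(k : ℂ) - p‖ * ‖bseq p θ k‖ ≤ ‖θ‖ * ((k : ℝ) + ‖p‖) * ‖bseq p θ k‖ := by
        gcongr
  _ = ((k : ℝ) + ‖p‖) / ((k : ℝ) + 1) * ((k : ℝ) + 1) * (‖θ‖ * ‖bseq p θ k‖) := by
        rw [div_mul_cancel₀ _ h3.ne']; ring
  _ = ((k : ℝ) + ‖p‖) / ((k : ℝ) + 1) * ‖θ‖ * ‖bseq p θ k‖ * ((k : ℝ) + 1) := by ring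

lemma aseq_succ (n : ℕ) :
    aseq (n + 1) = (2 * (n : ℂ) + 1) ^ 2 / (4 * ((n : ℂ) + 1) ^ 2) * aseq n := by
  have h1 : ((n : ℂ) + 1) ≠ 0 := Nat.cast_add_one_ne_zero n
  field_simp
  linear_combination ha n

lemma aseq_norm_ratio (n : ℕ) : ‖aseq (n + 1)‖ ≤ ‖aseq n‖ := by
  rw [aseq_succ, norm_mul]
  have he1 : (2 * (n : ℂ) + 1) = ((2 * n + 1 : ℕ) : ℂ) := by push_cast; ring
  have he2 : (4 * ((n : ℂ) + 1) ^ 2) = (((2 * n + 2) ^ 2 : ℕ) : ℂ) := by push_cast; ring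
  have hnorm : ‖(2 * (n : ℂ) + 1) ^ 2 / (4 * ((n : ℂ) + 1) ^ 2)‖ ≤ 1 := by
    rw [norm_div, norm_pow, he1, he2, Complex.norm_natCast, Complex.norm_natCast]
    rw [div_le_one (by positivity)]
    have : ((2 * n + 1 : ℕ) : ℝ) ≤ ((2 * n + 2 : ℕ) : ℝ) := by exact_mod_cast by omega
    calc ((2 * n + 1 : ℕ) : ℝ) ^ 2 ≤ ((2 * n + 2 : ℕ) : ℝ) ^ 2 :=
          pow_le_pow_left₀ (by positivity) this 2
    _ = (((2 * n + 2) ^ 2 : ℕ) : ℝ) := by push_cast; ring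
  calc ‖(2 * (n : ℂ) + 1) ^ 2 / (4 * ((n : ℂ) + 1) ^ 2)‖ * ‖aseq n‖ ≤ 1 * ‖aseq n‖ := by
        gcongr
  _ = ‖aseq n‖ := one_mul _

lemma summable_b_norm (p θ z : ℂ) (h : ‖θ‖ * ‖z‖ < 1) :
    Summable (fun k => ‖bseq p θ k * z ^ k‖) := by
  apply aux_sum (fun k => norm_nonneg _) (norm_nonneg p) (by positivity) h
  intro k hk
  have hkpos : (0 : ℝ) < k := by exact_mod_cast hk
  rw [norm_mul, norm_mul, norm_pow, norm_pow, pow_succ]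
  calc ‖bseq p θ (k + 1)‖ * (‖z‖ ^ k * ‖z‖)
      ≤ (((k : ℝ) + ‖p‖) / ((k : ℝ) + 1)) * ‖θ‖ * ‖bseq p θ k‖ * (‖z‖ ^ k * ‖z‖) := by
        gcongr; exact bseq_norm_ratio p θ k
  _ ≤ (((k : ℝ) + ‖p‖) / (k : ℝ)) * ‖θ‖ * ‖bseq p θ k‖ * (‖z‖ ^ k * ‖z‖) := by
        have hdiv : ((k : ℝ) + ‖p‖) / ((k : ℝ) + 1) ≤ ((k : ℝ) + ‖p‖) / (k : ℝ) := by
          apply div_le_div_of_nonneg_left (by positivity) hkpos (by linarith)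
        gcongr ?_ * ‖θ‖ * ‖bseq p θ k‖ * (‖z‖ ^ k * ‖z‖)
  _ = ((k : ℝ) + ‖p‖) / (k : ℝ) * (‖θ‖ * ‖z‖) * (‖bseq p θ k‖ * ‖z‖ ^ k) := by ring

lemma summable_a_norm (z : ℂ) (h : ‖z‖ < 1) :
    Summable (fun n => ‖aseq n * z ^ n‖) := by
  apply aux_sum (fun k => norm_nonneg _) (zero_le_one) (norm_nonneg z) h
  intro k hk
  have hkpos : (0 : ℝ) < k := by exact_mod_cast hk
  rw [norm_mul, norm_mul, norm_pow, norm_pow, pow_succ]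
  calc ‖aseq (k + 1)‖ * (‖z‖ ^ k * ‖z‖) ≤ ‖aseq k‖ * (‖z‖ ^ k * ‖z‖) := by
        gcongr; exact aseq_norm_ratio k
  _ = 1 * ‖z‖ * (‖aseq k‖ * ‖z‖ ^ k) := by ring
  _ ≤ (((k : ℝ) + 1) / (k : ℝ)) * ‖z‖ * (‖aseq k‖ * ‖z‖ ^ k) := by
        have h1 : (1 : ℝ) ≤ ((k : ℝ) + 1) / (k : ℝ) := by
          rw [le_div_iff₀ hkpos]; linarith
        gcongr ?_ * ‖z‖ * (‖aseq k‖ * ‖z‖ ^ k)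

end S19

namespace S19

lemma binom (p θ z : ℂ) (hz : ‖θ‖ * ‖z‖ < 1) :
    HasSum (fun k => bseq p θ k * z ^ k) ((1 - θ * z) ^ p) := by
  -- choose a radius ρ
  obtain ⟨ρ, hρz, hρ1⟩ : ∃ ρ : ℝ, ‖z‖ < ρ ∧ ‖θ‖ * ρ < 1 := by
    rcases eq_or_lt_of_le (norm_nonneg θ) with h0 | h0
    · exact ⟨‖z‖ + 1, by linarith, by rw [← h0]; norm_num⟩
    · refine ⟨(‖z‖ + 1 / ‖θ‖) / 2, ?_, ?_⟩
      · have h1 : ‖z‖ < 1 / ‖θ‖ := by rw [lt_div_iff₀ h0]; linarith [hz]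
        linarith
      · have h1 : ‖θ‖ * (1 / ‖θ‖) = 1 := mul_one_div_cancel h0.ne'
        calc ‖θ‖ * ((‖z‖ + 1 / ‖θ‖) / 2) = (‖θ‖ * ‖z‖ + ‖θ‖ * (1 / ‖θ‖)) / 2 := by ring
        _ = (‖θ‖ * ‖z‖ + 1) / 2 := by rw [h1]
        _ < 1 := by linarith
  have hρ0 : 0 < ρ := lt_of_le_of_lt (norm_nonneg z) hρz
  have hzs : z ∈ Metric.ball (0 : ℂ) ρ := mem_ball_zero_iff.2 hρz
  have h0s : (0 : ℂ) ∈ Metric.ball (0 : ℂ) ρ := mem_ball_zero_iff.2 (by simpa using hρ0)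
  have hw1 : ∀ w ∈ Metric.ball (0 : ℂ) ρ, ‖θ‖ * ‖w‖ < 1 := by
    intro w hw
    rw [mem_ball_zero_iff] at hw
    calc ‖θ‖ * ‖w‖ ≤ ‖θ‖ * ρ := by gcongr
    _ < 1 := hρ1
  have hwne : ∀ w ∈ Metric.ball (0 : ℂ) ρ, 0 < (1 - θ * w).re := by
    intro w hw
    have h1 : (θ * w).re ≤ ‖θ * w‖ := by
      exact Complex.re_le_norm _
    have h2 : ‖θ * w‖ < 1 := by rw [norm_mul]; exact hw1 w hw
    simp only [Complex.sub_re, Complex.one_re]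
    linarith
  have hne : ∀ w ∈ Metric.ball (0 : ℂ) ρ, (1 - θ * w) ≠ 0 := by
    intro w hw h
    have := hwne w hw
    rw [h] at this
    simp at this
  -- summable derivative bound
  have hU : Summable (fun k : ℕ => ‖bseq p θ k‖ * k * ρ ^ (k - 1)) := by
    apply aux_sum (fun k => by positivity) (norm_nonneg p)
      (by positivity : (0:ℝ) ≤ ‖θ‖ * ρ) hρ1
    intro k hk
    obtain ⟨j, rfl⟩ : ∃ j, k = j + 1 := ⟨k - 1, by omega⟩
    have hj2 : (0:ℝ) < (j:ℝ) + 1 + 1 := by positivity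
    have hj1 : (0:ℝ) < (j:ℝ) + 1 := by positivity
    have hr := bseq_norm_ratio p θ (j + 1)
    push_cast at hr
    show ‖bseq p θ (j + 1 + 1)‖ * ((j + 1 + 1 : ℕ) : ℝ) * ρ ^ (j + 1) ≤ _
    calc ‖bseq p θ (j + 1 + 1)‖ * ((j + 1 + 1 : ℕ) : ℝ) * ρ ^ (j + 1)
        ≤ (((j:ℝ) + 1 + ‖p‖) / ((j:ℝ) + 1 + 1)) * ‖θ‖ * ‖bseq p θ (j + 1)‖
            * ((j + 1 + 1 : ℕ) : ℝ) * ρ ^ (j + 1) := by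
          gcongr ?_ * ((j + 1 + 1 : ℕ) : ℝ) * ρ ^ (j + 1)
    _ = (((j:ℝ) + 1 + ‖p‖) / ((j:ℝ) + 1)) * (‖θ‖ * ρ)
            * (‖bseq p θ (j + 1)‖ * ((j + 1 : ℕ) : ℝ) * ρ ^ j) := by
          push_cast
          rw [pow_succ]
          field_simp
    _ = (((j + 1 : ℕ) : ℝ) + ‖p‖) / ((j + 1 : ℕ) : ℝ) * (‖θ‖ * ρ)
            * (‖bseq p θ (j + 1)‖ * ((j + 1 : ℕ) : ℝ) * ρ ^ j) := by push_cast; ring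
  -- differentiability of the sum
  have hg : ∀ w ∈ Metric.ball (0 : ℂ) ρ, HasDerivAt (fun y => ∑' (k : ℕ), bseq p θ k * y ^ k)
      (∑' (k : ℕ), bseq p θ k * ((k : ℂ) * w ^ (k - 1))) w := by
    intro w hw
    apply hasDerivAt_tsum_of_isPreconnected hU Metric.isOpen_ball
      ((convex_ball _ _).isPreconnected)
      (fun k y _ => (hasDerivAt_pow k y).const_mul (bseq p θ k))
      ?_ h0s ?_ hw
    · intro k y hy
      rw [mem_ball_zero_iff] at hy
      rw [norm_mul, norm_mul, norm_pow, Complex.norm_natCast]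
      calc ‖bseq p θ k‖ * ((k:ℝ) * ‖y‖ ^ (k - 1)) ≤ ‖bseq p θ k‖ * ((k:ℝ) * ρ ^ (k - 1)) := by
            gcongr
      _ = ‖bseq p θ k‖ * (k:ℝ) * ρ ^ (k - 1) := by ring
    · apply summable_of_ne_finset_zero (s := {0})
      intro k hk
      simp only [Finset.mem_singleton] at hk
      simp [zero_pow hk]
  -- the ODE satisfied by the sum
  have hode : ∀ w ∈ Metric.ball (0 : ℂ) ρ,
      (1 - θ * w) * (∑' (k : ℕ), bseq p θ k * ((k : ℂ) * w ^ (k - 1)))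
        + θ * p * (∑' (k : ℕ), bseq p θ k * w ^ k) = 0 := by
    intro w hw
    have hwρ : ‖w‖ < ρ := mem_ball_zero_iff.1 hw
    have hf' : Summable (fun k : ℕ => bseq p θ k * ((k : ℂ) * w ^ (k - 1))) := by
      apply Summable.of_norm_bounded hU
      intro k
      rw [norm_mul, norm_mul, norm_pow, Complex.norm_natCast]
      calc ‖bseq p θ k‖ * ((k:ℝ) * ‖w‖ ^ (k - 1)) ≤ ‖bseq p θ k‖ * ((k:ℝ) * ρ ^ (k - 1)) := by
            gcongr
      _ = ‖bseq p θ k‖ * (k:ℝ) * ρ ^ (k - 1) := by ring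
    have hA : Summable (fun k : ℕ => bseq p θ (k + 1) * (((k : ℂ) + 1) * w ^ k)) := by
      have h1 := (summable_nat_add_iff 1).2 hf'
      apply h1.congr
      intro k
      simp only [Nat.add_sub_cancel]
      push_cast
      ring
    have hB : Summable (fun k : ℕ => θ * (k : ℂ) * bseq p θ k * w ^ k) := by
      apply ((hf'.mul_left (θ * w)).congr)
      intro k
      match k with
      | 0 => simp
      | (j+1) =>
        simp only [Nat.add_sub_cancel]
        push_cast
        ring
    have hC : Summable (fun k : ℕ => θ * p * (bseq p θ k * w ^ k)) :=
      ((summable_b_norm p θ w (hw1 w hw)).of_norm).mul_left (θ * p)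
    have sA : (∑' (k : ℕ), bseq p θ k * ((k : ℂ) * w ^ (k - 1)))
        = ∑' (k : ℕ), bseq p θ (k + 1) * (((k : ℂ) + 1) * w ^ k) := by
      rw [Summable.tsum_eq_zero_add hf']
      simp only [Nat.cast_zero, zero_mul, mul_zero, zero_add, Nat.add_sub_cancel]
      apply tsum_congr
      intro k
      push_cast
      ring
    have sB : (θ * w) * (∑' (k : ℕ), bseq p θ k * ((k : ℂ) * w ^ (k - 1)))
        = ∑' (k : ℕ), θ * (k : ℂ) * bseq p θ k * w ^ k := by
      rw [← tsum_mul_left]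
      apply tsum_congr
      intro k
      match k with
      | 0 => simp
      | (j+1) =>
        simp only [Nat.add_sub_cancel]
        push_cast
        ring
    have sC : θ * p * (∑' (k : ℕ), bseq p θ k * w ^ k)
        = ∑' (k : ℕ), θ * p * (bseq p θ k * w ^ k) := (tsum_mul_left).symm
    have expand : (1 - θ * w) * (∑' (k : ℕ), bseq p θ k * ((k : ℂ) * w ^ (k - 1)))
        + θ * p * (∑' (k : ℕ), bseq p θ k * w ^ k)
        = (∑' (k : ℕ), bseq p θ (k + 1) * (((k : ℂ) + 1) * w ^ k))
          - (∑' (k : ℕ), θ * (k : ℂ) * bseq p θ k * w ^ k)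
          + (∑' (k : ℕ), θ * p * (bseq p θ k * w ^ k)) := by
      rw [← sA, ← sB, ← sC]
      ring
    rw [expand, ← Summable.tsum_sub hA hB, ← Summable.tsum_add (hA.sub hB) hC]
    calc (∑' (k : ℕ), (bseq p θ (k + 1) * (((k : ℂ) + 1) * w ^ k)
            - θ * (k : ℂ) * bseq p θ k * w ^ k + θ * p * (bseq p θ k * w ^ k)))
        = ∑' (_ : ℕ), (0 : ℂ) := by
          apply tsum_congr
          intro k
          linear_combination (w ^ k) * hb p θ k
    _ = 0 := tsum_zero
  -- the quotient is constant
  have hφ : ∀ w ∈ Metric.ball (0 : ℂ) ρ, HasDerivAt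
      (fun y => (∑' (k : ℕ), bseq p θ k * y ^ k) * (1 - θ * y) ^ (-p)) 0 w := by
    intro w hw
    have hlin : HasDerivAt (fun y : ℂ => 1 - θ * y) (-θ) w := by
      simpa using ((hasDerivAt_id w).const_mul θ).const_sub 1
    have hslit : (1 - θ * w) ∈ Complex.slitPlane := by
      rw [Complex.mem_slitPlane_iff]
      exact Or.inl (hwne w hw)
    have h2 := hlin.cpow_const (c := -p) hslit
    have h3 := (hg w hw).mul h2
    refine h3.congr_deriv ?_
    have e : (1 - θ * w) ^ (-p) = (1 - θ * w) ^ (-p - 1) * (1 - θ * w) := by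
      have e2 := Complex.cpow_add (x := 1 - θ * w) (-p - 1) 1 (hne w hw)
      rw [Complex.cpow_one, show -p - 1 + 1 = -p by ring] at e2
      exact e2
    rw [e]
    linear_combination ((1 - θ * w) ^ (-p - 1)) * hode w hw
  have hzero : (1 : ℂ →L[ℂ] ℂ).smulRight (0 : ℂ) = 0 := by ext x; simp
  have hconst : (fun y => (∑' (k : ℕ), bseq p θ k * y ^ k) * (1 - θ * y) ^ (-p)) z
      = (fun y => (∑' (k : ℕ), bseq p θ k * y ^ k) * (1 - θ * y) ^ (-p)) 0 := by
    apply (convex_ball (0:ℂ) ρ).is_const_of_fderivWithin_eq_zero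
      (fun w hw => (hφ w hw).differentiableAt.differentiableWithinAt) ?_ hzs h0s
    intro w hw
    rw [fderivWithin_of_isOpen Metric.isOpen_ball hw]
    have := (hφ w hw).hasFDerivAt
    rw [show ContinuousLinearMap.toSpanSingleton ℂ (0:ℂ) = 0 by ext; simp] at this
    exact this.fderiv
  -- evaluate at 0
  have g0 : (∑' (k : ℕ), bseq p θ k * (0:ℂ) ^ k) = 1 := by
    rw [tsum_eq_single 0 (fun k hk => by simp [zero_pow hk])]
    simp [bseq_zero]
  simp only [mul_zero, sub_zero, Complex.one_cpow, g0, one_mul] at hconst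
  -- conclude
  have hcz : (1 - θ * z) ^ (-p) * (1 - θ * z) ^ p = 1 := by
    rw [← Complex.cpow_add _ _ (hne z hzs)]
    simp
  have hgz : (∑' (k : ℕ), bseq p θ k * z ^ k) = (1 - θ * z) ^ p := by
    calc (∑' (k : ℕ), bseq p θ k * z ^ k)
        = (∑' (k : ℕ), bseq p θ k * z ^ k) * ((1 - θ * z) ^ (-p) * (1 - θ * z) ^ p) := by
          rw [hcz, mul_one]
    _ = ((∑' (k : ℕ), bseq p θ k * z ^ k) * (1 - θ * z) ^ (-p)) * (1 - θ * z) ^ p := by ring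
    _ = (1 - θ * z) ^ p := by rw [hconst, one_mul]
  have hsum := (summable_b_norm p θ z hz).of_norm
  rw [← hgz]
  exact hsum.hasSum

end S19

namespace S19

lemma hF (z : ℂ) : F (1 / 2) (1 / 2) 1 z = ∑' (n : ℕ), aseq n * z ^ n := rfl

lemma key1 (p θ : ℂ) (hθn : 0 < ‖θ‖) (z : ℂ) (hzr : ‖z‖ < min 1 (1 / ‖θ‖)) :
    (1 - θ * z) ^ p * F (1 / 2) (1 / 2) 1 z = ∑' (n : ℕ), cseq p θ n * z ^ n := by
  have hz1 : ‖z‖ < 1 := lt_of_lt_of_le hzr (min_le_left _ _)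
  have hzθ : ‖θ‖ * ‖z‖ < 1 := by
    have h2 : ‖z‖ < 1 / ‖θ‖ := lt_of_lt_of_le hzr (min_le_right _ _)
    rw [lt_div_iff₀ hθn] at h2
    linarith [h2]
  have hbnorm := summable_b_norm p θ z hzθ
  have hanorm := summable_a_norm z hz1
  have hbin := (binom p θ z hzθ).tsum_eq
  rw [hF, ← hbin,
    tsum_mul_tsum_eq_tsum_sum_antidiagonal_of_summable_norm hbnorm hanorm]
  apply tsum_congr
  intro n
  rw [Finset.Nat.sum_antidiagonal_eq_sum_range_succ_mk, cseq, Finset.sum_mul]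
  apply Finset.sum_congr rfl
  intro k hk
  rw [Finset.mem_range] at hk
  have hkn : k ≤ n := by omega
  rw [show bseq p θ (k, n - k).1 * z ^ (k, n - k).1 * (aseq (k, n - k).2 * z ^ (k, n - k).2)
      = bseq p θ k * aseq (n - k) * (z ^ k * z ^ (n - k)) from by ring,
    ← pow_add, Nat.add_sub_cancel' hkn]

lemma Scnorm (p θ : ℂ) (hθn : 0 < ‖θ‖) (z : ℂ) (hzr : ‖z‖ < min 1 (1 / ‖θ‖)) :
    Summable (fun n => ‖cseq p θ n * z ^ n‖) := by
  have hz1 : ‖z‖ < 1 := lt_of_lt_of_le hzr (min_le_left _ _)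
  have hzθ : ‖θ‖ * ‖z‖ < 1 := by
    have h2 : ‖z‖ < 1 / ‖θ‖ := lt_of_lt_of_le hzr (min_le_right _ _)
    rw [lt_div_iff₀ hθn] at h2
    linarith [h2]
  have h := summable_norm_sum_mul_antidiagonal_of_summable_norm
    (summable_b_norm p θ z hzθ) (summable_a_norm z hz1)
  apply h.congr
  intro n
  congr 1
  rw [Finset.Nat.sum_antidiagonal_eq_sum_range_succ_mk, cseq, Finset.sum_mul]
  apply Finset.sum_congr rfl
  intro k hk
  rw [Finset.mem_range] at hk
  have hkn : k ≤ n := by omega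
  rw [show bseq p θ (k, n - k).1 * z ^ (k, n - k).1 * (aseq (k, n - k).2 * z ^ (k, n - k).2)
      = bseq p θ k * aseq (n - k) * (z ^ k * z ^ (n - k)) from by ring,
    ← pow_add, Nat.add_sub_cancel' hkn]

end S19

namespace S19

open FormalMultilinearSeries in
lemma u_eq (p θ : ℂ) (hθ : θ ≠ 0) (u : ℕ → ℂ)
    (hu : ∀ z : ℂ, ‖z‖ < min 1 (1 / ‖θ‖) →
      (1 - θ * z) ^ p * ((Real.pi : ℂ) / 2 * F (1 / 2) (1 / 2) 1 z)
        = (Real.pi : ℂ) / 2 * ∑' n : ℕ, u n * z ^ n) :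
    u = cseq p θ := by
  have hθn : 0 < ‖θ‖ := norm_pos_iff.2 hθ
  set r : ℝ := min 1 (1 / ‖θ‖) with hrdef
  have hr0 : 0 < r := lt_min one_pos (by positivity)
  have hπ : ((Real.pi : ℂ) / 2) ≠ 0 := by
    simp [Complex.ofReal_ne_zero, Real.pi_ne_zero]
  have huceq : ∀ z : ℂ, ‖z‖ < r → (∑' n : ℕ, u n * z ^ n) = ∑' n : ℕ, cseq p θ n * z ^ n := by
    intro z hzr
    have h1 := hu z hzr
    rw [show (1 - θ * z) ^ p * ((Real.pi : ℂ) / 2 * F (1 / 2) (1 / 2) 1 z)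
        = (Real.pi : ℂ) / 2 * ((1 - θ * z) ^ p * F (1 / 2) (1 / 2) 1 z) from by ring,
      key1 p θ hθn z hzr] at h1
    exact (mul_left_cancel₀ hπ h1).symm
  -- power series for cseq
  set q : FormalMultilinearSeries ℂ ℂ ℂ := ofScalars ℂ (cseq p θ) with hqdef
  have hqsum : ∀ z : ℂ, q.sum z = ∑' n : ℕ, cseq p θ n * z ^ n := by
    intro z
    apply tsum_congr
    intro n
    rw [hqdef, ofScalars_apply_eq, smul_eq_mul]
  have hr2 : (0 : ℝ) < r / 2 := by positivity
  set r2 : NNReal := ⟨r / 2, hr2.le⟩ with hr2def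
  have hsum2 : Summable (fun n => ‖q n‖ * ((r2 : ℝ)) ^ n) := by
    have h := Scnorm p θ hθn ((r / 2 : ℝ) : ℂ)
      (by rw [Complex.norm_real, Real.norm_eq_abs, _root_.abs_of_nonneg hr2.le]; linarith)
    apply h.congr
    intro n
    rw [norm_mul, norm_pow, Complex.norm_real, Real.norm_eq_abs, _root_.abs_of_nonneg hr2.le,
      ofScalars_norm]
    rfl
  have hqrad : 0 < q.radius := by
    calc (0 : ENNReal) < r2 := by exact_mod_cast hr2
    _ ≤ q.radius := q.le_radius_of_summable_norm hsum2
  have hq_at : HasFPowerSeriesAt q.sum q 0 := (q.hasFPowerSeriesOnBall hqrad).hasFPowerSeriesAt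
  have hq0 : q.sum 0 = 1 := by
    rw [hqsum, tsum_eq_single 0 (fun k hk => by simp [zero_pow hk])]
    simp [cseq, bseq_zero, aseq_zero]
  have hev : ∀ᶠ z in nhds (0 : ℂ), ‖q.sum z - 1‖ < 1 := by
    have h1 : Filter.Tendsto q.sum (nhds 0) (nhds 1) := hq0 ▸ hq_at.continuousAt
    have h2 := Metric.tendsto_nhds.1 h1 1 one_pos
    apply h2.mono
    intro x hx
    rwa [dist_eq_norm] at hx
  obtain ⟨ε, hε0, hε⟩ := Metric.eventually_nhds_iff.1 hev
  set z0 : ℝ := min ε r / 2 with hz0def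
  have hz00 : 0 < z0 := by
    have : 0 < min ε r := lt_min hε0 hr0
    positivity
  have hz0norm : ‖((z0 : ℝ) : ℂ)‖ = z0 := by
    rw [Complex.norm_real, Real.norm_eq_abs, _root_.abs_of_nonneg hz00.le]
  have hz0r : ‖((z0 : ℝ) : ℂ)‖ < r := by
    rw [hz0norm]
    have : min ε r ≤ r := min_le_right _ _
    linarith
  have hz0ε : ‖((z0 : ℝ) : ℂ)‖ < ε := by
    rw [hz0norm]
    have : min ε r ≤ ε := min_le_left _ _
    linarith
  have hne0 : (∑' n : ℕ, cseq p θ n * ((z0 : ℝ) : ℂ) ^ n) ≠ 0 := by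
    intro h
    have h1 : ‖q.sum ((z0 : ℝ) : ℂ) - 1‖ < 1 := by
      apply hε
      rwa [dist_eq_norm, sub_zero]
    rw [hqsum, h] at h1
    simp at h1
  have hsumu : Summable (fun n : ℕ => u n * ((z0 : ℝ) : ℂ) ^ n) := by
    by_contra hns
    exact hne0 (by rw [← huceq _ hz0r, tsum_eq_zero_of_not_summable hns])
  set qu : FormalMultilinearSeries ℂ ℂ ℂ := ofScalars ℂ u with hqudef
  have husum : ∀ z : ℂ, qu.sum z = ∑' n : ℕ, u n * z ^ n := by
    intro z
    apply tsum_congr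
    intro n
    rw [hqudef, ofScalars_apply_eq, smul_eq_mul]
  set z0' : NNReal := ⟨z0, hz00.le⟩ with hz0'def
  have htend : Filter.Tendsto (fun n => ‖qu n‖ * ((z0' : ℝ)) ^ n) Filter.atTop (nhds 0) := by
    have h1 := hsumu.tendsto_atTop_zero.norm
    rw [norm_zero] at h1
    apply h1.congr
    intro n
    rw [norm_mul, norm_pow, hz0norm, ofScalars_norm]
    rfl
  have hqurad : 0 < qu.radius := by
    calc (0 : ENNReal) < z0' := by exact_mod_cast hz00
    _ ≤ qu.radius := qu.le_radius_of_tendsto htend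
  have hqu_at : HasFPowerSeriesAt qu.sum qu 0 :=
    (qu.hasFPowerSeriesOnBall hqurad).hasFPowerSeriesAt
  have heq : ∀ᶠ z in nhds (0 : ℂ), qu.sum z = q.sum z := by
    apply Metric.eventually_nhds_iff.2 ⟨r, hr0, ?_⟩
    intro y hy
    rw [dist_eq_norm, sub_zero] at hy
    rw [husum, hqsum, huceq y hy]
  have hseq : qu = q := hqu_at.eq_formalMultilinearSeries_of_eventually hq_at heq
  exact ofScalars_series_injective (𝕜 := ℂ) ℂ hseq

lemma aseq_one : aseq 1 = 1 / 4 := by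
  have h := ha 0
  rw [aseq_zero] at h
  push_cast at h
  linear_combination h / 4

lemma aseq_two : aseq 2 = 9 / 64 := by
  have h := ha 1
  rw [aseq_one] at h
  push_cast at h
  linear_combination h / 16

lemma bseq_one (p θ : ℂ) : bseq p θ 1 = -θ * p := by
  have h := hb p θ 0
  rw [bseq_zero] at h
  push_cast at h
  linear_combination h

lemma bseq_two (p θ : ℂ) : bseq p θ 2 = θ ^ 2 * (p ^ 2 - p) / 2 := by
  have h := hb p θ 1
  rw [bseq_one] at h
  push_cast at h
  linear_combination h / 2

lemma cseq_zero (p θ : ℂ) : cseq p θ 0 = 1 := by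
  simp [cseq, bseq_zero, aseq_zero]

lemma cseq_one (p θ : ℂ) : cseq p θ 1 = (1 - 4 * θ * p) / 4 := by
  rw [cseq, Finset.sum_range_succ, Finset.sum_range_one]
  norm_num [bseq_zero, bseq_one, aseq_zero, aseq_one]
  ring

lemma cseq_two (p θ : ℂ) :
    cseq p θ 2 = (32 * θ ^ 2 * p ^ 2 - 32 * θ ^ 2 * p - 16 * θ * p + 9) / 64 := by
  rw [cseq, Finset.sum_range_succ, Finset.sum_range_succ, Finset.sum_range_one]
  norm_num [bseq_zero, bseq_one, bseq_two, aseq_zero, aseq_one, aseq_two]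
  ring

end S19

theorem stmt19 (p θ : ℂ) (hθ : θ ≠ 0)
    (u : ℕ → ℂ)
    (hu : ∀ z : ℂ, ‖z‖ < min 1 (1 / ‖θ‖) →
      (1 - θ * z) ^ p * ((Real.pi : ℂ) / 2 * F (1 / 2) (1 / 2) 1 z)
        = (Real.pi : ℂ) / 2 * ∑' n : ℕ, u n * z ^ n) :
    u 0 = 1 ∧ u 1 = (1 - 4 * θ * p) / 4 ∧
    u 2 = (32 * θ ^ 2 * p ^ 2 - 32 * θ ^ 2 * p - 16 * θ * p + 9) / 64 ∧
    ∀ n : ℕ, 2 ≤ n →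
      u (n + 1) =
        (8 * θ * (n : ℂ) * ((n : ℂ) - p) + (2 * (n : ℂ) + 1) ^ 2 - 4 * θ * p) /
            (4 * ((n : ℂ) + 1) ^ 2) * u n
        - θ * (2 * (θ + 2) * (n : ℂ) ^ 2 - 4 * (θ + 1) * (n : ℂ) * (p + 1) + 2 * θ * (p + 1) ^ 2 + 1) /
            (2 * ((n : ℂ) + 1) ^ 2) * u (n - 1)
        + θ ^ 2 * (-2 * (n : ℂ) + 2 * p + 3) ^ 2 / (4 * ((n : ℂ) + 1) ^ 2) * u (n - 2) := by
  have hueq := S19.u_eq p θ hθ u hu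
  subst hueq
  refine ⟨S19.cseq_zero p θ, S19.cseq_one p θ, S19.cseq_two p θ, ?_⟩
  intro n hn
  have hc := S19.crec p θ n hn
  have h1 : ((n : ℂ) + 1) ≠ 0 := Nat.cast_add_one_ne_zero n
  have h4 : (4 * ((n : ℂ) + 1) ^ 2) ≠ 0 := mul_ne_zero (by norm_num) (pow_ne_zero 2 h1)
  have h2 : (2 * ((n : ℂ) + 1) ^ 2) ≠ 0 := mul_ne_zero (by norm_num) (pow_ne_zero 2 h1)
  field_simp
  linear_combination 2 * hc
end
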